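/- arXiv:1304.7919 — 5 statements merged into one kernel-verified Lean document; each statement's English description precedes it below -/
import Mathlib

section
/- Karamata's Tauberian theorem: Let f : [0,∞) → ℝ be a nonnegative measurable function, let ρ ∈ [0,∞), and let L : (0,∞) → (0,∞) be slowly varying at infinity (i.e. for every c > 0, L(ct)/L(t) → 1 as t → ∞). Then the relation ∫₀^∞ e^{−st} f(t) dt ~ s^{−ρ} L(1/s) as s → 0⁺ holds if and only if ∫₀^t f(u) du ~ t^ρ L(t) / Γ(ρ+1) as t → ∞ (where a(x) ~ b(x) means the ratio a(x)/b(x) tends to 1). -/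
/-!
Write `U(t) = ∫₀^t f` and `ω(s) = ∫₀^∞ e^{-st} f(t) dt`. Each side of the equivalence says that
`t ↦ ω(1/t)`, respectively `U`, is a constant multiple of `t^ρ L(t)` up to a factor tending to `1`,
hence regularly varying of index `ρ`; so it suffices to derive `ω(1/t) ~ Γ(ρ+1) U(t)` from the
regular variation of either function.

Abelian direction: by Tonelli, `ω(1/t) = ∫₀^∞ e^{-x} U(xt) dx`. Regular variation gives the doubling
bound `U(2t) ≤ 2^{ρ+1} U(t)` for large `t`, so `e^{-x} U(xt) / U(t)` is dominated by
`2^{ρ+1} e^{-x} (1 + x^{ρ+1})` and converges to `e^{-x} x^ρ`, whose integral is `Γ(ρ+1)`.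

Tauberian direction (Karamata): for a polynomial `P = ∑ aₖ Xᵏ` with `P(0) = 0`,
`∫₀^∞ P(e^{-t/T}) f(t) dt / ω(1/T) = ∑ aₖ ω(k/T) / ω(1/T) → ∑ aₖ k^{-ρ}`, and for `ρ > 0` this limit
is `Γ(ρ)⁻¹ ∫₀^∞ P(e^{-x}) x^{ρ-1} dx` (for `ρ = 0` it is `P(1)`). Since `U(T)` is the same integral
with `P` replaced by the indicator of `[e^{-1}, 1]`, it suffices to squeeze this indicator between
polynomials whose limits are close to `1 / Γ(ρ+1)`; Weierstrass approximation of a piecewise linear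
function, with error `ε y`, provides them.
-/

open MeasureTheory Filter Set Topology Real Polynomial
open scoped ENNReal

namespace Karamata

lemma tendsto_nhdsGT_zero_iff_comp_inv {α : Type*} {g : ℝ → α} {l : Filter α} :
    Tendsto g (𝓝[>] 0) l ↔ Tendsto (fun t => g t⁻¹) atTop l := by
  rw [← inv_nhdsGT_zero (𝕜 := ℝ), ← Filter.map_inv, tendsto_map'_iff]
  simp [Function.comp_def]

lemma _root_.Filter.Tendsto.div_mul_div {α : Type*} {l : Filter α} {a b c : α → ℝ} {x y : ℝ}
    (hab : Tendsto (fun z => a z / b z) l (𝓝 x)) (hbc : Tendsto (fun z => b z / c z) l (𝓝 y))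
    (hy : y ≠ 0) : Tendsto (fun z => a z / c z) l (𝓝 (x * y)) := by
  refine (hab.mul hbc).congr' ?_
  filter_upwards [hbc.eventually_ne hy] with z hz
  exact div_mul_div_cancel₀ (left_ne_zero_of_mul (by simpa [div_eq_mul_inv] using hz))

/-! ### Regular variation -/

def RegularlyVarying (ρ : ℝ) (V : ℝ → ℝ) : Prop :=
  ∀ c : ℝ, 0 < c → Tendsto (fun t => V (c * t) / V t) atTop (𝓝 (c ^ ρ))

lemma RegularlyVarying.eventually_ne_zero {ρ : ℝ} {V : ℝ → ℝ} (hV : RegularlyVarying ρ V) :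
    ∀ᶠ t in atTop, V t ≠ 0 := by
  filter_upwards [(hV 1 one_pos).eventually_ne (by simp : (1 : ℝ) ^ ρ ≠ 0)] with t ht h
  simp [h] at ht

lemma regularlyVarying_of_tendsto_div {ρ κ : ℝ} {F L : ℝ → ℝ}
    (hL : ∀ c : ℝ, 0 < c → Tendsto (fun t => L (c * t) / L t) atTop (𝓝 1))
    (hL_pos : ∀ t, 0 < t → 0 < L t) (hκ : κ ≠ 0)
    (hF : Tendsto (fun t => F t / (t ^ ρ * L t)) atTop (𝓝 κ)) : RegularlyVarying ρ F := by
  intro c hc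
  have hFc : Tendsto (fun t => F (c * t) / ((c * t) ^ ρ * L (c * t))) atTop (𝓝 κ) :=
    hF.comp (tendsto_id.const_mul_atTop hc)
  have hinv : Tendsto (fun t => t ^ ρ * L t / F t) atTop (𝓝 κ⁻¹) := by
    simpa only [inv_div] using hF.inv₀ hκ
  have key := ((hFc.mul (hL c hc)).mul hinv).const_mul (c ^ ρ)
  rw [mul_one, mul_inv_cancel₀ hκ, mul_one] at key
  refine key.congr' ?_
  filter_upwards [eventually_gt_atTop 0, hF.eventually_ne hκ] with t ht hFt
  have hFt' : F t ≠ 0 := by rintro h; simp [h] at hFt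
  have hLt := hL_pos t ht
  have hLct := hL_pos (c * t) (mul_pos hc ht)
  rw [mul_rpow hc.le ht.le]
  field_simp

lemma _root_.Monotone.le_mul_rpow_of_doubling {V : ℝ → ℝ} (hV : Monotone V) {p T : ℝ}
    (hp : 0 ≤ p) (hT : 0 ≤ T) (hV0 : ∀ t, T ≤ t → 0 ≤ V t)
    (h2 : ∀ t, T ≤ t → V (2 * t) ≤ 2 ^ p * V t) {t x : ℝ} (ht : T ≤ t) (hx : 1 ≤ x) :
    V (x * t) ≤ 2 ^ p * x ^ p * V t := by
  have ht0 : 0 ≤ t := hT.trans ht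
  obtain ⟨n, hn⟩ := pow_unbounded_of_one_lt x one_lt_two
  induction n generalizing x with
  | zero => rw [pow_zero] at hn; linarith
  | succ n ih =>
    rcases le_total x 2 with hx2 | hx2
    · calc V (x * t) ≤ V (2 * t) := hV (by nlinarith)
        _ ≤ 2 ^ p * V t := h2 t ht
        _ ≤ 2 ^ p * x ^ p * V t := by
          have hxp := one_le_rpow hx hp
          have h0 : 0 ≤ 2 ^ p * V t := mul_nonneg (by positivity) (hV0 t ht)
          nlinarith
    · have hx' : 1 ≤ x / 2 := by linarith
      calc V (x * t) = V (2 * (x / 2 * t)) := by ring_nf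
        _ ≤ 2 ^ p * V (x / 2 * t) := h2 _ (by nlinarith)
        _ ≤ 2 ^ p * (2 ^ p * (x / 2) ^ p * V t) := by
          gcongr
          exact ih hx' (by rw [pow_succ] at hn; linarith)
        _ = 2 ^ p * x ^ p * V t := by
          rw [div_rpow (by linarith) zero_le_two]
          field_simp

lemma RegularlyVarying.eventually_le_mul_one_add_rpow {ρ : ℝ} {V : ℝ → ℝ}
    (hV : RegularlyVarying ρ V) (hmono : Monotone V) (hV0 : ∀ t, 0 ≤ V t) (hρ : 0 ≤ ρ) :
    ∀ᶠ t in atTop, ∀ x, 0 ≤ x → V (x * t) ≤ 2 ^ (ρ + 1) * (1 + x ^ (ρ + 1)) * V t := by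
  have hdouble : ∀ᶠ t in atTop, V (2 * t) ≤ 2 ^ (ρ + 1) * V t := by
    have hlt : (2 : ℝ) ^ ρ < 2 ^ (ρ + 1) := rpow_lt_rpow_of_exponent_lt one_lt_two (by linarith)
    filter_upwards [(hV 2 two_pos).eventually (eventually_lt_nhds hlt), hV.eventually_ne_zero]
      with t ht hVt
    rw [div_lt_iff₀ ((hV0 t).lt_of_ne' hVt)] at ht
    exact ht.le
  obtain ⟨T, hT⟩ := eventually_atTop.1 hdouble
  filter_upwards [eventually_ge_atTop (max T 0)] with t ht x hx
  have h2p : (1 : ℝ) ≤ 2 ^ (ρ + 1) := one_le_rpow one_le_two (by linarith)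
  have hxp : 0 ≤ x ^ (ρ + 1) := rpow_nonneg hx _
  rcases le_total x 1 with hx1 | hx1
  · calc V (x * t) ≤ V t := hmono (by nlinarith [le_max_right T 0])
      _ ≤ 2 ^ (ρ + 1) * (1 + x ^ (ρ + 1)) * V t := by
        have h1 : 1 ≤ 2 ^ (ρ + 1) * (1 + x ^ (ρ + 1)) := by nlinarith
        nlinarith [hV0 t]
  · calc V (x * t) ≤ 2 ^ (ρ + 1) * x ^ (ρ + 1) * V t :=
        hmono.le_mul_rpow_of_doubling (by linarith) (le_max_right T 0) (fun t _ => hV0 t)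
          (fun s hs => hT s ((le_max_left T 0).trans hs)) ht hx1
      _ ≤ 2 ^ (ρ + 1) * (1 + x ^ (ρ + 1)) * V t := by
        have := hV0 t
        gcongr
        linarith

lemma integrableOn_exp_neg_mul_one_add_rpow {p : ℝ} (hp : -1 < p) :
    IntegrableOn (fun x => exp (-x) * (1 + x ^ p)) (Ioi 0) := by
  have hpow : IntegrableOn (fun x => exp (-x) * x ^ p) (Ioi 0) := by
    simpa using GammaIntegral_convergent (s := p + 1) (by linarith)
  exact ((integrableOn_exp_neg_Ioi 0).add hpow).congr_fun (fun x _ => by simp [mul_add])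
    measurableSet_Ioi

lemma RegularlyVarying.tendsto_integral_exp_neg_mul_div {ρ : ℝ} {V : ℝ → ℝ}
    (hV : RegularlyVarying ρ V) (hmono : Monotone V) (hV0 : ∀ t, 0 ≤ V t) (hρ : 0 ≤ ρ) :
    Tendsto (fun t => (∫ x in Ioi 0, exp (-x) * V (x * t)) / V t) atTop
      (𝓝 (Gamma (ρ + 1))) := by
  have hΓ : Gamma (ρ + 1) = ∫ x in Ioi 0, exp (-x) * x ^ ρ := by
    simp [Gamma_eq_integral (by linarith : 0 < ρ + 1)]
  rw [hΓ]
  refine (tendsto_integral_filter_of_dominated_convergence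
    (fun x => 2 ^ (ρ + 1) * (exp (-x) * (1 + x ^ (ρ + 1)))) ?_ ?_ ?_ ?_).congr
    (fun t => integral_div _ _)
  · refine Eventually.of_forall fun t => ?_
    exact ((measurable_exp.comp measurable_neg).mul
      (hmono.measurable.comp (measurable_id.mul_const t))).div_const _ |>.aestronglyMeasurable
  · filter_upwards [hV.eventually_le_mul_one_add_rpow hmono hV0 hρ, hV.eventually_ne_zero]
      with t ht hVt
    filter_upwards [ae_restrict_mem measurableSet_Ioi] with x hx
    have hVt' : 0 < V t := (hV0 t).lt_of_ne' hVt
    rw [norm_of_nonneg (div_nonneg (mul_nonneg (exp_pos _).le (hV0 _)) hVt'.le),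
      div_le_iff₀ hVt']
    calc exp (-x) * V (x * t) ≤ exp (-x) * (2 ^ (ρ + 1) * (1 + x ^ (ρ + 1)) * V t) :=
          mul_le_mul_of_nonneg_left (ht x (le_of_lt hx)) (exp_pos _).le
      _ = 2 ^ (ρ + 1) * (exp (-x) * (1 + x ^ (ρ + 1))) * V t := by ring
  · exact (integrableOn_exp_neg_mul_one_add_rpow (by linarith)).const_mul _
  · filter_upwards [ae_restrict_mem measurableSet_Ioi] with x hx
    simpa only [mul_div_assoc] using (hV x hx).const_mul (exp (-x))

/-! ### Polynomials in `e^{-x}` -/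

noncomputable def dirichletEval (ρ : ℝ) (P : ℝ[X]) : ℝ := P.sum fun k a => a * (k : ℝ) ^ (-ρ)

lemma dirichletEval_neg (ρ : ℝ) (P : ℝ[X]) : dirichletEval ρ (-P) = -dirichletEval ρ P := by
  simp [dirichletEval, Polynomial.sum_def, Finset.sum_neg_distrib]

lemma dirichletEval_zero (P : ℝ[X]) : dirichletEval 0 P = P.eval 1 := by
  simp [dirichletEval, eval_eq_sum]

lemma eval_exp_neg (P : ℝ[X]) (x : ℝ) :
    P.eval (exp (-x)) = P.sum fun k a => a * exp (-(k * x)) := by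
  simp only [eval_eq_sum, ← exp_nat_mul, mul_neg]

lemma ne_zero_of_mem_support {P : ℝ[X]} (hP0 : P.coeff 0 = 0) {k : ℕ} (hk : k ∈ P.support) :
    k ≠ 0 := by
  rintro rfl
  exact mem_support_iff.1 hk hP0

lemma integral_eval_exp_neg_mul_rpow {ρ : ℝ} (hρ : 0 < ρ) {P : ℝ[X]} (hP0 : P.coeff 0 = 0) :
    IntegrableOn (fun x => P.eval (exp (-x)) * x ^ (ρ - 1)) (Ioi 0) ∧
      ∫ x in Ioi 0, P.eval (exp (-x)) * x ^ (ρ - 1) = Gamma ρ * dirichletEval ρ P := by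
  have hsum : (fun x => P.eval (exp (-x)) * x ^ (ρ - 1))
      = fun x => ∑ k ∈ P.support, P.coeff k * (x ^ (ρ - 1) * exp (-(k * x))) := by
    ext x
    rw [eval_exp_neg, Polynomial.sum_def, Finset.sum_mul]
    exact Finset.sum_congr rfl fun k _ => by ring
  have hterm : ∀ k ∈ P.support, IntegrableOn (fun x => x ^ (ρ - 1) * exp (-(k * x))) (Ioi 0) := by
    intro k hk
    have hk' : (0 : ℝ) < k := by exact_mod_cast Nat.pos_of_ne_zero (ne_zero_of_mem_support hP0 hk)
    simpa [neg_mul] using integrableOn_rpow_mul_exp_neg_mul_rpow (p := 1) (by linarith) one_pos hk'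
  rw [hsum]
  refine ⟨integrable_finsetSum _ fun k hk => (hterm k hk).const_mul _, ?_⟩
  rw [integral_finsetSum _ fun k hk => (hterm k hk).const_mul _, dirichletEval, Polynomial.sum_def,
    Finset.mul_sum]
  refine Finset.sum_congr rfl fun k hk => ?_
  have hk' : (0 : ℝ) < k := by exact_mod_cast Nat.pos_of_ne_zero (ne_zero_of_mem_support hP0 hk)
  rw [integral_const_mul, integral_rpow_mul_exp_neg_mul_Ioi hρ hk', one_div, inv_rpow hk'.le,
    ← rpow_neg hk'.le]
  ring

lemma integral_indicator_Iic_rpow {ρ a : ℝ} (hρ : 0 < ρ) (ha : 0 ≤ a) :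
    IntegrableOn ((Iic a).indicator fun x => x ^ (ρ - 1)) (Ioi 0) ∧
      ∫ x in Ioi 0, (Iic a).indicator (fun x => x ^ (ρ - 1)) x = a ^ ρ / ρ := by
  have hint : IntegrableOn (fun x : ℝ => x ^ (ρ - 1)) (Ioc 0 a) :=
    (intervalIntegrable_iff_integrableOn_Ioc_of_le ha).1
      (intervalIntegral.intervalIntegrable_rpow' (by linarith))
  constructor
  · rw [IntegrableOn, integrable_indicator_iff measurableSet_Iic, IntegrableOn,
      Measure.restrict_restrict measurableSet_Iic, Iic_inter_Ioi]
    exact hint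
  · rw [setIntegral_indicator measurableSet_Iic, Ioi_inter_Iic, ← intervalIntegral.integral_of_le ha,
      integral_rpow (Or.inl (by linarith)), sub_add_cancel, zero_rpow hρ.ne', sub_zero]

lemma dirichletEval_le_of_le_indicator {ρ a κ ε : ℝ} (hρ : 0 ≤ ρ) (ha : 0 < a) {P : ℝ[X]}
    (hP0 : P.coeff 0 = 0)
    (hP : ∀ y ∈ Icc (0 : ℝ) 1, P.eval y ≤ κ * (Ici (exp (-a))).indicator 1 y + ε * y) :
    dirichletEval ρ P ≤ κ * (a ^ ρ / Gamma (ρ + 1)) + ε := by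
  rcases hρ.eq_or_lt with rfl | hρ
  · have h1 := hP 1 ⟨zero_le_one, le_rfl⟩
    rw [indicator_of_mem (mem_Ici.2 (exp_le_one_iff.2 (by linarith)))] at h1
    simpa [dirichletEval_zero] using h1
  obtain ⟨hPi, hPeq⟩ := integral_eval_exp_neg_mul_rpow hρ hP0
  obtain ⟨hIi, hIeq⟩ := integral_indicator_Iic_rpow hρ ha.le
  have hGi := GammaIntegral_convergent hρ
  have hle : Gamma ρ * dirichletEval ρ P ≤ κ * (a ^ ρ / ρ) + ε * Gamma ρ := by
    rw [← hPeq, ← hIeq, Gamma_eq_integral hρ, ← integral_const_mul, ← integral_const_mul,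
      ← integral_add (hIi.const_mul _) (hGi.const_mul _)]
    refine setIntegral_mono_on hPi ((hIi.const_mul _).add (hGi.const_mul _)) measurableSet_Ioi
      fun x hx => ?_
    have hx0 : (0 : ℝ) < x := hx
    have hy := hP (exp (-x)) ⟨(exp_pos _).le, exp_le_one_iff.2 (by linarith)⟩
    have hind : (Ici (exp (-a))).indicator (1 : ℝ → ℝ) (exp (-x))
        = (Iic a).indicator 1 x := by
      simp [indicator_apply, exp_le_exp]
    rw [hind] at hy
    have := rpow_nonneg hx0.le (ρ - 1)
    simp only [indicator_apply, mem_Iic, Pi.one_apply] at hy ⊢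
    split_ifs at hy ⊢ <;> nlinarith
  have hΓ := Gamma_pos_of_pos hρ
  rw [Gamma_add_one hρ.ne', ← mul_le_mul_iff_of_pos_left hΓ]
  calc Gamma ρ * dirichletEval ρ P ≤ κ * (a ^ ρ / ρ) + ε * Gamma ρ := hle
    _ = Gamma ρ * (κ * (a ^ ρ / (ρ * Gamma ρ)) + ε) := by field_simp

lemma exists_polynomial_near_mul {q : ℝ → ℝ} (hq : Continuous q) {c : ℝ} (hc : 0 < c)
    (hq0 : ∀ y ≤ c, q y = 0) {ε : ℝ} (hε : 0 < ε) :
    ∃ P : ℝ[X], P.coeff 0 = 0 ∧ ∀ y ∈ Icc (0 : ℝ) 1, |P.eval y - q y| ≤ ε * y := by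
  -- `P = X * p` with `p` close to `q y / y`, which is continuous because `q` vanishes near `0`
  have hr : Continuous fun y => q y / max y c :=
    hq.div (continuous_id.max continuous_const) fun y => (hc.trans_le (le_max_right y c)).ne'
  obtain ⟨p, hp⟩ := exists_polynomial_near_of_continuousOn 0 1 _ hr.continuousOn ε hε
  refine ⟨X * p, by simp, fun y hy => ?_⟩
  have hqy : q y = y * (q y / max y c) := by
    rcases le_or_gt y c with h | h
    · simp [hq0 y h]
    · rw [max_eq_left h.le, mul_div_cancel₀ _ (hc.trans h).ne']
  rw [eval_mul, eval_X, hqy, ← mul_sub, abs_mul, abs_of_nonneg hy.1, mul_comm ε]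
  exact mul_le_mul_of_nonneg_left (hp y hy).le hy.1

noncomputable def ramp (b c y : ℝ) : ℝ := max 0 (min 1 ((y - b) / (c - b)))

lemma continuous_ramp (b c : ℝ) : Continuous (ramp b c) := by
  unfold ramp
  fun_prop

lemma ramp_eq_zero {b c y : ℝ} (hbc : b < c) (hy : y ≤ b) : ramp b c y = 0 :=
  max_eq_left (min_le_of_right_le (div_nonpos_of_nonpos_of_nonneg (by linarith) (by linarith)))

lemma indicator_Ici_le_ramp {b c : ℝ} (hbc : b < c) (y : ℝ) :
    (Ici c).indicator 1 y ≤ ramp b c y := by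
  by_cases hy : y ∈ Ici c
  · rw [indicator_of_mem hy, ramp, Pi.one_apply, min_eq_left ((one_le_div (by linarith)).2
      (by linarith [mem_Ici.1 hy]))]
    exact le_max_right _ _
  · rw [indicator_of_notMem hy]
    exact le_max_left _ _

lemma ramp_le_indicator_Ici {b c : ℝ} (hbc : b < c) (y : ℝ) :
    ramp b c y ≤ (Ici b).indicator 1 y := by
  by_cases hy : y ∈ Ici b
  · rw [indicator_of_mem hy, Pi.one_apply]
    exact max_le zero_le_one (min_le_left _ _)
  · rw [indicator_of_notMem hy, ramp_eq_zero hbc (not_le.1 hy).le]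

lemma exists_polynomial_near_indicator {b c ε : ℝ} (hb : 0 < b) (hbc : b < c) (hε : 0 < ε) :
    ∃ P : ℝ[X], P.coeff 0 = 0 ∧ ∀ y ∈ Icc (0 : ℝ) 1,
      (Ici c).indicator 1 y - ε * y ≤ P.eval y ∧ P.eval y ≤ (Ici b).indicator 1 y + ε * y := by
  obtain ⟨P, hP0, hP⟩ :=
    exists_polynomial_near_mul (continuous_ramp b c) hb (fun y hy => ramp_eq_zero hbc hy) hε
  refine ⟨P, hP0, fun y hy => ?_⟩
  have := abs_le.1 (hP y hy)
  constructor <;> linarith [indicator_Ici_le_ramp hbc y, ramp_le_indicator_Ici hbc y]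

lemma tendsto_rpow_div_Gamma (ρ : ℝ) :
    Tendsto (fun a : ℝ => a ^ ρ / Gamma (ρ + 1)) (𝓝 1) (𝓝 (Gamma (ρ + 1))⁻¹) := by
  simpa using ((continuousAt_id.rpow_const (Or.inl one_ne_zero)).tendsto).div_const
    (Gamma (ρ + 1))

lemma exists_polynomial_ge_indicator_dirichletEval_lt {ρ B : ℝ} (hρ : 0 ≤ ρ)
    (hB : (Gamma (ρ + 1))⁻¹ < B) :
    ∃ P : ℝ[X], P.coeff 0 = 0 ∧ (∀ y ∈ Icc (0 : ℝ) 1, (Ici (exp (-1))).indicator 1 y ≤ P.eval y) ∧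
      dirichletEval ρ P < B := by
  have hev : ∀ᶠ a in 𝓝[>] 1, a ^ ρ / Gamma (ρ + 1) < B :=
    ((tendsto_rpow_div_Gamma ρ).mono_left nhdsWithin_le_nhds).eventually (eventually_lt_nhds hB)
  obtain ⟨a, haB, ha⟩ := (hev.and self_mem_nhdsWithin).exists
  obtain ⟨ε, hε, hεB⟩ : ∃ ε, 0 < ε ∧ a ^ ρ / Gamma (ρ + 1) + 2 * ε < B :=
    ⟨(B - a ^ ρ / Gamma (ρ + 1)) / 4, by linarith, by linarith⟩
  obtain ⟨P, hP0, hP⟩ :=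
    exists_polynomial_near_indicator (exp_pos (-a)) (exp_lt_exp.2 (neg_lt_neg ha)) hε
  refine ⟨P + C ε * X, by simp [hP0], fun y hy => ?_, ?_⟩
  · simp only [eval_add, eval_mul, eval_C, eval_X]
    linarith [(hP y hy).1]
  · have := dirichletEval_le_of_le_indicator (P := P + C ε * X) (a := a) (κ := 1) (ε := 2 * ε) hρ
      (zero_lt_one.trans ha) (by simp [hP0]) fun y hy => by
        simp only [eval_add, eval_mul, eval_C, eval_X]
        linarith [(hP y hy).2]
    linarith

lemma exists_polynomial_le_indicator_lt_dirichletEval {ρ B : ℝ} (hρ : 0 ≤ ρ)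
    (hB : B < (Gamma (ρ + 1))⁻¹) :
    ∃ P : ℝ[X], P.coeff 0 = 0 ∧ (∀ y ∈ Icc (0 : ℝ) 1, P.eval y ≤ (Ici (exp (-1))).indicator 1 y) ∧
      B < dirichletEval ρ P := by
  have hev : ∀ᶠ a in 𝓝[<] 1, B < a ^ ρ / Gamma (ρ + 1) :=
    ((tendsto_rpow_div_Gamma ρ).mono_left nhdsWithin_le_nhds).eventually (eventually_gt_nhds hB)
  obtain ⟨a, haB, ha⟩ := (hev.and (Ioo_mem_nhdsLT zero_lt_one)).exists
  obtain ⟨ε, hε, hεB⟩ : ∃ ε, 0 < ε ∧ B < a ^ ρ / Gamma (ρ + 1) - 2 * ε :=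
    ⟨(a ^ ρ / Gamma (ρ + 1) - B) / 4, by linarith, by linarith⟩
  obtain ⟨P, hP0, hP⟩ :=
    exists_polynomial_near_indicator (exp_pos (-1)) (exp_lt_exp.2 (neg_lt_neg ha.2)) hε
  refine ⟨P - C ε * X, by simp [hP0], fun y hy => ?_, ?_⟩
  · simp only [eval_sub, eval_mul, eval_C, eval_X]
    linarith [(hP y hy).2]
  · have := dirichletEval_le_of_le_indicator (P := -(P - C ε * X)) (a := a) (κ := -1)
      (ε := 2 * ε) hρ ha.1 (by simp [hP0]) fun y hy => by
        simp only [eval_neg, eval_sub, eval_mul, eval_C, eval_X]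
        linarith [(hP y hy).1]
    rw [dirichletEval_neg] at this
    linarith

/-! ### Laplace transforms of nonnegative functions -/

lemma lintegral_Ioi_mul_lintegral_Ioi_div {F g : ℝ → ℝ≥0∞} (hF : Measurable F)
    (hg : Measurable g) {c : ℝ} (hc : 0 < c) :
    ∫⁻ u in Ioi 0, F u * ∫⁻ x in Ioi (u / c), g x
      = ∫⁻ x in Ioi 0, g x * ∫⁻ u in Ioc 0 (x * c), F u := by
  set H : ℝ → ℝ → ℝ≥0∞ := fun u x => if u < x * c then F u * g x else 0
  have hH : Measurable (Function.uncurry H) :=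
    Measurable.ite (measurableSet_lt measurable_fst (measurable_snd.mul_const c))
      ((hF.comp measurable_fst).mul (hg.comp measurable_snd)) measurable_const
  have hleft : ∀ u ∈ Ioi (0 : ℝ), ∫⁻ x in Ioi 0, H u x = F u * ∫⁻ x in Ioi (u / c), g x := by
    intro u hu
    have hH : ∀ x, H u x = (Ioi (u / c)).indicator (fun x => F u * g x) x := by
      simp [H, indicator_apply, div_lt_iff₀ hc]
    rw [lintegral_congr hH, lintegral_indicator measurableSet_Ioi,
      Measure.restrict_restrict measurableSet_Ioi,
      inter_eq_left.2 (Ioi_subset_Ioi (div_pos hu hc).le), lintegral_const_mul _ hg]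
  have hright : ∀ x, ∫⁻ u in Ioi 0, H u x = g x * ∫⁻ u in Ioc 0 (x * c), F u := by
    intro x
    have hH : ∀ u, H u x = (Iio (x * c)).indicator F u * g x := by
      simp [H, indicator_apply]
    rw [lintegral_congr hH, lintegral_mul_const _ (hF.indicator measurableSet_Iio),
      lintegral_indicator measurableSet_Iio, Measure.restrict_restrict measurableSet_Iio,
      Iio_inter_Ioi, Measure.restrict_congr_set Ioo_ae_eq_Ioc, mul_comm]
  rw [setLIntegral_congr_fun measurableSet_Ioi (fun u hu => (hleft u hu).symm),
    lintegral_congr (fun x => (hright x).symm)]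
  exact lintegral_lintegral_swap hH.aemeasurable

lemma lintegral_Ioi_ofReal_exp_neg (a : ℝ) :
    ∫⁻ x in Ioi a, ENNReal.ofReal (exp (-x)) = ENNReal.ofReal (exp (-a)) := by
  rw [← ofReal_integral_eq_lintegral_ofReal (integrableOn_exp_neg_Ioi a)
    (Eventually.of_forall fun x => (exp_pos _).le), integral_exp_neg_Ioi]

noncomputable def cumulative (f : ℝ → ℝ) (t : ℝ) : ℝ := ∫ u in Ioc 0 t, f u

noncomputable def laplace (f : ℝ → ℝ) (s : ℝ) : ℝ := ∫ t in Ioi 0, exp (-s * t) * f t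

section

variable {f : ℝ → ℝ}

lemma cumulative_nonneg (hf : ∀ t, 0 < t → 0 ≤ f t) (t : ℝ) : 0 ≤ cumulative f t :=
  setIntegral_nonneg measurableSet_Ioc fun u hu => hf u hu.1

lemma cumulative_mono (hf : ∀ t, 0 < t → 0 ≤ f t) (hloc : ∀ T, IntegrableOn f (Ioc 0 T)) :
    Monotone (cumulative f) := fun _ b hab =>
  setIntegral_mono_set (hloc b)
    (by filter_upwards [ae_restrict_mem measurableSet_Ioc] with u hu using hf u hu.1)
    (Ioc_subset_Ioc_right hab).eventuallyLE

lemma integrableOn_Ioc_of_eventually_cumulative_ne_zero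
    (h : ∀ᶠ t in atTop, cumulative f t ≠ 0) (T : ℝ) : IntegrableOn f (Ioc 0 T) := by
  obtain ⟨t, ht, htT⟩ := (h.and (eventually_ge_atTop T)).exists
  by_contra hT
  exact ht (integral_undef fun hint => hT (IntegrableOn.mono_set hint (Ioc_subset_Ioc_right htT)))

lemma lintegral_exp_neg_inv_mul (hf_meas : Measurable f) (hf : ∀ t, 0 < t → 0 ≤ f t)
    (hloc : ∀ T, IntegrableOn f (Ioc 0 T)) {t : ℝ} (ht : 0 < t) :
    ∫⁻ u in Ioi 0, ENNReal.ofReal (exp (-t⁻¹ * u) * f u)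
      = ∫⁻ x in Ioi 0, ENNReal.ofReal (exp (-x) * cumulative f (x * t)) := by
  have key := lintegral_Ioi_mul_lintegral_Ioi_div (ENNReal.measurable_ofReal.comp hf_meas)
    (ENNReal.measurable_ofReal.comp (measurable_exp.comp measurable_neg)) ht
  simp only [Function.comp_apply, lintegral_Ioi_ofReal_exp_neg] at key
  convert key using 3 with u x
  · rw [ENNReal.ofReal_mul (exp_pos _).le, mul_comm, div_eq_inv_mul, neg_mul]
  · rw [ENNReal.ofReal_mul (exp_pos _).le, cumulative, ofReal_integral_eq_lintegral_ofReal
      (hloc _) (by filter_upwards [ae_restrict_mem measurableSet_Ioc] with u hu using hf u hu.1)]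

lemma laplace_inv_eq_integral (hf_meas : Measurable f) (hf : ∀ t, 0 < t → 0 ≤ f t)
    (hloc : ∀ T, IntegrableOn f (Ioc 0 T)) {t : ℝ} (ht : 0 < t) :
    laplace f t⁻¹ = ∫ x in Ioi 0, exp (-x) * cumulative f (x * t) := by
  have hU := (cumulative_mono hf hloc).measurable
  -- no integrability is needed: both sides are the `toReal` of the same lintegral
  rw [laplace, integral_eq_lintegral_of_nonneg_ae, integral_eq_lintegral_of_nonneg_ae,
    lintegral_exp_neg_inv_mul hf_meas hf hloc ht]
  · exact Eventually.of_forall fun x => mul_nonneg (exp_pos _).le (cumulative_nonneg hf _)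
  · exact ((measurable_exp.comp measurable_neg).mul
      (hU.comp (measurable_id.mul_const t))).aestronglyMeasurable
  · filter_upwards [ae_restrict_mem measurableSet_Ioi] with u hu
    exact mul_nonneg (exp_pos _).le (hf u hu)
  · exact (by fun_prop : Measurable fun u => exp (-t⁻¹ * u) * f u).aestronglyMeasurable

lemma tendsto_laplace_inv_div_cumulative {ρ : ℝ} (hf_meas : Measurable f)
    (hf : ∀ t, 0 < t → 0 ≤ f t) (hρ : 0 ≤ ρ) (hU : RegularlyVarying ρ (cumulative f)) :
    Tendsto (fun t => laplace f t⁻¹ / cumulative f t) atTop (𝓝 (Gamma (ρ + 1))) := by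
  have hloc := integrableOn_Ioc_of_eventually_cumulative_ne_zero hU.eventually_ne_zero
  refine (hU.tendsto_integral_exp_neg_mul_div (cumulative_mono hf hloc) (cumulative_nonneg hf)
    hρ).congr' ?_
  filter_upwards [eventually_gt_atTop 0] with t ht
  rw [laplace_inv_eq_integral hf_meas hf hloc ht]

lemma exp_neg_mul_mem_Icc {s u : ℝ} (hs : 0 ≤ s) (hu : 0 < u) : exp (-s * u) ∈ Icc (0 : ℝ) 1 :=
  ⟨(exp_pos _).le, exp_le_one_iff.2 (by nlinarith)⟩

lemma laplace_nonneg (hf : ∀ t, 0 < t → 0 ≤ f t) (s : ℝ) : 0 ≤ laplace f s :=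
  setIntegral_nonneg measurableSet_Ioi fun t ht => mul_nonneg (exp_pos _).le (hf t ht)

lemma integrableOn_of_laplace_ne_zero {s : ℝ} (h : laplace f s ≠ 0) :
    IntegrableOn (fun t => exp (-s * t) * f t) (Ioi 0) := by
  by_contra hint
  exact h (integral_undef hint)

lemma integrableOn_comp_exp_neg_mul {g : ℝ → ℝ} (hg : Measurable g) {K : ℝ}
    (hgK : ∀ y ∈ Icc (0 : ℝ) 1, |g y| ≤ K * y) (hf_meas : Measurable f) {s : ℝ} (hs : 0 ≤ s)
    (hint : IntegrableOn (fun t => exp (-s * t) * f t) (Ioi 0)) :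
    IntegrableOn (fun t => g (exp (-s * t)) * f t) (Ioi 0) := by
  refine Integrable.mono' (hint.norm.const_mul K) (by fun_prop) ?_
  filter_upwards [ae_restrict_mem measurableSet_Ioi] with t ht
  rw [norm_mul, norm_mul, norm_of_nonneg (exp_pos _).le, ← mul_assoc]
  exact mul_le_mul_of_nonneg_right (hgK _ (exp_neg_mul_mem_Icc hs ht)) (norm_nonneg _)

lemma integrableOn_eval_exp_neg_mul {P : ℝ[X]} (hP0 : P.coeff 0 = 0) (hf_meas : Measurable f)
    {s : ℝ} (hs : 0 ≤ s) (hint : IntegrableOn (fun t => exp (-s * t) * f t) (Ioi 0)) :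
    IntegrableOn (fun t => P.eval (exp (-s * t)) * f t) (Ioi 0) := by
  obtain ⟨Q, rfl⟩ := X_dvd_iff.2 hP0
  obtain ⟨K, hK⟩ := isCompact_Icc.exists_bound_of_continuousOn (Q.continuous (R := ℝ)).continuousOn
  refine integrableOn_comp_exp_neg_mul (Polynomial.continuous _).measurable (K := K) (fun y hy => ?_) hf_meas hs hint
  rw [eval_mul, eval_X, abs_mul, abs_of_nonneg hy.1, mul_comm K]
  exact mul_le_mul_of_nonneg_left (hK y hy) hy.1

lemma integrableOn_indicator_exp_neg_mul (hf_meas : Measurable f) {s : ℝ} (hs : 0 ≤ s)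
    (hint : IntegrableOn (fun t => exp (-s * t) * f t) (Ioi 0)) :
    IntegrableOn (fun t => (Ici (exp (-1))).indicator 1 (exp (-s * t)) * f t) (Ioi 0) := by
  refine integrableOn_comp_exp_neg_mul (measurable_one.indicator measurableSet_Ici)
    (K := exp 1) (fun y hy => ?_) hf_meas hs hint
  by_cases hy' : y ∈ Ici (exp (-1))
  · rw [indicator_of_mem hy', Pi.one_apply, abs_one, ← div_le_iff₀' (exp_pos 1), one_div,
      ← exp_neg]
    exact hy'
  · rw [indicator_of_notMem hy', abs_zero]
    exact mul_nonneg (exp_pos 1).le hy.1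

lemma integral_eval_exp_neg_mul {P : ℝ[X]} (hP0 : P.coeff 0 = 0) (hf_meas : Measurable f) {s : ℝ}
    (hs : 0 ≤ s) (hint : IntegrableOn (fun t => exp (-s * t) * f t) (Ioi 0)) :
    ∫ t in Ioi 0, P.eval (exp (-s * t)) * f t = P.sum fun k a => a * laplace f (k * s) := by
  have hterm : ∀ k ∈ P.support, IntegrableOn (fun t => exp (-(k * s) * t) * f t) (Ioi 0) := by
    intro k hk
    have hk1 : 1 ≤ k := Nat.one_le_iff_ne_zero.2 (ne_zero_of_mem_support hP0 hk)
    refine (integrableOn_comp_exp_neg_mul (continuous_pow k).measurable (K := 1) (fun y hy => ?_)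
      hf_meas hs hint).congr_fun (fun t _ => ?_) measurableSet_Ioi
    · rw [abs_of_nonneg (pow_nonneg hy.1 k), one_mul]
      exact pow_le_of_le_one hy.1 hy.2 (by omega)
    · simp only [← exp_nat_mul]
      ring_nf
  have hsum : (fun t => P.eval (exp (-s * t)) * f t)
      = fun t => ∑ k ∈ P.support, P.coeff k * (exp (-(k * s) * t) * f t) := by
    ext t
    rw [neg_mul, eval_exp_neg, Polynomial.sum_def, Finset.sum_mul]
    exact Finset.sum_congr rfl fun k _ => by ring_nf
  rw [hsum, integral_finsetSum _ fun k hk => (hterm k hk).const_mul _, Polynomial.sum_def]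
  exact Finset.sum_congr rfl fun k _ => integral_const_mul _ _

lemma cumulative_inv_eq_integral {s : ℝ} (hs : 0 < s) :
    cumulative f s⁻¹ = ∫ t in Ioi 0, (Ici (exp (-1))).indicator 1 (exp (-s * t)) * f t := by
  have h : ∀ t ∈ Ioi (0 : ℝ),
      (Ici (exp (-1))).indicator 1 (exp (-s * t)) * f t = (Iic s⁻¹).indicator f t := by
    intro t _
    have hiff : exp (-1) ≤ exp (-s * t) ↔ t ≤ s⁻¹ := by
      rw [exp_le_exp, neg_mul, neg_le_neg_iff, inv_eq_one_div, le_div_iff₀' hs]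
    by_cases ht : t ≤ s⁻¹
    · rw [indicator_of_mem (mem_Ici.2 (hiff.2 ht)), indicator_of_mem (mem_Iic.2 ht),
        Pi.one_apply, one_mul]
    · rw [indicator_of_notMem (fun h => ht (hiff.1 (mem_Ici.1 h))),
        indicator_of_notMem (fun h => ht (mem_Iic.1 h)), zero_mul]
  rw [setIntegral_congr_fun measurableSet_Ioi h, setIntegral_indicator measurableSet_Iic,
    Ioi_inter_Iic, cumulative]

lemma setIntegral_comp_exp_neg_mul_mono {g h : ℝ → ℝ} (hf : ∀ t, 0 < t → 0 ≤ f t) {s : ℝ}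
    (hs : 0 ≤ s) (hgi : IntegrableOn (fun t => g (exp (-s * t)) * f t) (Ioi 0))
    (hhi : IntegrableOn (fun t => h (exp (-s * t)) * f t) (Ioi 0))
    (hgh : ∀ y ∈ Icc (0 : ℝ) 1, g y ≤ h y) :
    ∫ t in Ioi 0, g (exp (-s * t)) * f t ≤ ∫ t in Ioi 0, h (exp (-s * t)) * f t :=
  setIntegral_mono_on hgi hhi measurableSet_Ioi fun t ht =>
    mul_le_mul_of_nonneg_right (hgh _ (exp_neg_mul_mem_Icc hs ht)) (hf t ht)

lemma tendsto_integral_eval_div_laplace {ρ : ℝ} (hf_meas : Measurable f)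
    (hω : RegularlyVarying ρ fun t => laplace f t⁻¹) {P : ℝ[X]} (hP0 : P.coeff 0 = 0) :
    Tendsto (fun t => (∫ u in Ioi 0, P.eval (exp (-t⁻¹ * u)) * f u) / laplace f t⁻¹) atTop
      (𝓝 (dirichletEval ρ P)) := by
  have hk : ∀ k ∈ P.support,
      Tendsto (fun t => laplace f (k * t⁻¹) / laplace f t⁻¹) atTop (𝓝 ((k : ℝ) ^ (-ρ))) := by
    intro k hk
    have hk' : (0 : ℝ) < k := by exact_mod_cast Nat.pos_of_ne_zero (ne_zero_of_mem_support hP0 hk)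
    have := hω k⁻¹ (inv_pos.2 hk')
    rw [inv_rpow hk'.le, ← rpow_neg hk'.le] at this
    exact this.congr fun t => by simp only [mul_inv, inv_inv]
  rw [dirichletEval, Polynomial.sum_def]
  refine (tendsto_finsetSum _ fun k hk' => (hk k hk').const_mul (P.coeff k)).congr' ?_
  filter_upwards [eventually_gt_atTop 0, hω.eventually_ne_zero] with t ht hωt
  rw [integral_eval_exp_neg_mul hP0 hf_meas (inv_pos.2 ht).le (integrableOn_of_laplace_ne_zero hωt),
    Polynomial.sum_def, Finset.sum_div]
  exact Finset.sum_congr rfl fun k _ => (mul_div_assoc _ _ _).symm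

lemma tendsto_cumulative_div_laplace_inv {ρ : ℝ} (hf_meas : Measurable f)
    (hf : ∀ t, 0 < t → 0 ≤ f t) (hρ : 0 ≤ ρ) (hω : RegularlyVarying ρ fun t => laplace f t⁻¹) :
    Tendsto (fun t => cumulative f t / laplace f t⁻¹) atTop (𝓝 (Gamma (ρ + 1))⁻¹) := by
  have hcum : ∀ t, 0 < t →
      cumulative f t = ∫ u in Ioi 0, (Ici (exp (-1))).indicator 1 (exp (-t⁻¹ * u)) * f u := by
    intro t ht
    simpa using cumulative_inv_eq_integral (f := f) (inv_pos.2 ht)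
  refine tendsto_order.2 ⟨fun B hB => ?_, fun B hB => ?_⟩
  · obtain ⟨P, hP0, hPle, hBP⟩ := exists_polynomial_le_indicator_lt_dirichletEval hρ hB
    filter_upwards [(tendsto_integral_eval_div_laplace hf_meas hω hP0).eventually
      (eventually_gt_nhds hBP), eventually_gt_atTop 0, hω.eventually_ne_zero] with t hBt ht hωt
    have hint := integrableOn_of_laplace_ne_zero hωt
    have hs : (0 : ℝ) ≤ t⁻¹ := (inv_pos.2 ht).le
    refine hBt.trans_le (div_le_div_of_nonneg_right ?_ (laplace_nonneg hf _))
    rw [hcum t ht]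
    exact setIntegral_comp_exp_neg_mul_mono hf hs (integrableOn_eval_exp_neg_mul hP0 hf_meas hs hint)
      (integrableOn_indicator_exp_neg_mul hf_meas hs hint) hPle
  · obtain ⟨P, hP0, hPge, hBP⟩ := exists_polynomial_ge_indicator_dirichletEval_lt hρ hB
    filter_upwards [(tendsto_integral_eval_div_laplace hf_meas hω hP0).eventually
      (eventually_lt_nhds hBP), eventually_gt_atTop 0, hω.eventually_ne_zero] with t hBt ht hωt
    have hint := integrableOn_of_laplace_ne_zero hωt
    have hs : (0 : ℝ) ≤ t⁻¹ := (inv_pos.2 ht).le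
    refine lt_of_le_of_lt (div_le_div_of_nonneg_right ?_ (laplace_nonneg hf _)) hBt
    rw [hcum t ht]
    exact setIntegral_comp_exp_neg_mul_mono hf hs (integrableOn_indicator_exp_neg_mul hf_meas hs hint)
      (integrableOn_eval_exp_neg_mul hP0 hf_meas hs hint) hPge

end

lemma tendsto_div_rpow_neg_mul_iff {g L : ℝ → ℝ} {ρ : ℝ} {l : Filter ℝ} :
    Tendsto (fun s => g s / (s ^ (-ρ) * L (1 / s))) (𝓝[>] 0) l ↔
      Tendsto (fun t => g t⁻¹ / (t ^ ρ * L t)) atTop l := by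
  refine tendsto_nhdsGT_zero_iff_comp_inv.trans (tendsto_congr' ?_)
  filter_upwards [eventually_gt_atTop 0] with t ht
  rw [inv_rpow ht.le, rpow_neg ht.le, inv_inv, one_div, inv_inv]

lemma tendsto_intervalIntegral_div_div_iff {f D : ℝ → ℝ} {c : ℝ} (hc : c ≠ 0) :
    Tendsto (fun t => (∫ u in (0 : ℝ)..t, f u) / (D t / c)) atTop (𝓝 1) ↔
      Tendsto (fun t => cumulative f t / D t) atTop (𝓝 c⁻¹) := by
  refine Iff.trans ?_ (tendsto_const_smul_iff₀ hc)
  simp only [smul_eq_mul, mul_inv_cancel₀ hc]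
  refine tendsto_congr' ?_
  filter_upwards [eventually_ge_atTop 0] with t ht
  rw [intervalIntegral.integral_of_le ht, div_div_eq_mul_div, mul_comm, mul_div_assoc, cumulative]

end Karamata

open Karamata in
/-- Karamata's Tauberian theorem: for a nonnegative measurable `f`, `ρ ≥ 0`
and `L` positive on `(0,∞)` and slowly varying at infinity, the Laplace
transform `∫₀^∞ e^{-st} f(t) dt` is asymptotic to `s^{-ρ} L(1/s)` as `s → 0⁺`
iff `∫₀^t f(u) du` is asymptotic to `t^ρ L(t) / Γ(ρ+1)` as `t → ∞`. -/
theorem karamata_tauberian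
    (f : ℝ → ℝ) (hf_meas : Measurable f) (hf_nonneg : ∀ t, 0 ≤ t → 0 ≤ f t)
    (ρ : ℝ) (hρ : 0 ≤ ρ)
    (L : ℝ → ℝ) (hL_pos : ∀ t, 0 < t → 0 < L t)
    (hL_slow : ∀ c : ℝ, 0 < c →
      Tendsto (fun t => L (c * t) / L t) atTop (nhds 1)) :
    Tendsto
      (fun s : ℝ => (∫ t in Ioi (0:ℝ), Real.exp (-s * t) * f t) / (s ^ (-ρ) * L (1 / s)))
      (nhdsWithin 0 (Ioi 0)) (nhds 1)
    ↔
    Tendsto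
      (fun t : ℝ => (∫ u in (0:ℝ)..t, f u) / (t ^ ρ * L t / Real.Gamma (ρ + 1)))
      atTop (nhds 1) := by
  have hf : ∀ t, 0 < t → 0 ≤ f t := fun t ht => hf_nonneg t ht.le
  have hΓ : Gamma (ρ + 1) ≠ 0 := (Gamma_pos_of_pos (by linarith)).ne'
  refine (tendsto_div_rpow_neg_mul_iff (g := laplace f)).trans
    (Iff.trans ?_ (tendsto_intervalIntegral_div_div_iff hΓ).symm)
  constructor
  · intro h
    have hω := regularlyVarying_of_tendsto_div hL_slow hL_pos one_ne_zero h
    simpa using (tendsto_cumulative_div_laplace_inv hf_meas hf hρ hω).div_mul_div h one_ne_zero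
  · intro h
    have hU := regularlyVarying_of_tendsto_div hL_slow hL_pos (inv_ne_zero hΓ) h
    simpa [hΓ] using
      (tendsto_laplace_inv_div_cumulative hf_meas hf hρ hU).div_mul_div h (inv_ne_zero hΓ)
end

section
/- Let (Pₙ)ₙ≥₁ be a sequence of continuously differentiable functions Pₙ : [0,∞) → [0,1] with Σₙ Pₙ(t) ≤ 1 for all t, satisfying the system of differential equations P₁′(t) = 2P₂(t), P₂′(t) = −4P₂(t) + 3P₃(t), and Pₙ′(t) = −2nPₙ(t) + (n+1)Pₙ₊₁(t) + (n−1)Pₙ₋₁(t) for all n ≥ 3, with initial conditions P₂(0) = 1 and Pₙ(0) = 0 for all n ≠ 2. Then P₁ satisfies the renewal equation P₁(t) = 2t/(1+t)³ + ∫₀ᵗ 2/(1+(t−y))³ · P₁(y) dy for all t ≥ 0. -/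
open MeasureTheory Filter Set intervalIntegral
open Topology

/-!
Duality with the backward equation. The weights `g k u = (k+1) uᵏ / (1+u)^(k+2)` solve the
adjoint system `g₀' = -2/(1+u)³`, `g_{k+1}' = -2(k+2) g_{k+1} + (k+2) g_k + (k+2) g_{k+2}`,
so for fixed `T` the derivative of `s ↦ ∑_{k<M+2} g k (T-s) P_{k+1}(s)` telescopes to
`2/(1+T-s)³ P₁(s)` plus a flux through the truncation level. Integrating over `[0,T]`, the
endpoint values are `P₁(T)` and `2T/(1+T)³`, so the renewal equation holds up to the integral
of the flux, which is `O(M² (T/(1+T))^M)` because `0 ≤ Pₙ ≤ 1`, and vanishes as `M → ∞`.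
-/

namespace RenewalEquation

noncomputable def dualWeight (k : ℕ) (u : ℝ) : ℝ :=
  ((k : ℝ) + 1) * u ^ k / (1 + u) ^ (k + 2)

lemma hasDerivAt_dualWeight_zero {u : ℝ} (hu : 1 + u ≠ 0) :
    HasDerivAt (dualWeight 0) (-2 / (1 + u) ^ 3) u := by
  have hform : dualWeight 0 = fun x : ℝ => 1 / (1 + x) ^ 2 := by
    ext x; simp [dualWeight]
  rw [hform]
  refine ((hasDerivAt_const u (1 : ℝ)).fun_div
    (((hasDerivAt_id u).const_add 1).fun_pow 2) (pow_ne_zero 2 hu)).congr_deriv ?_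
  simp only [id]; field_simp; ring

lemma hasDerivAt_dualWeight_succ (k : ℕ) {u : ℝ} (hu : 1 + u ≠ 0) :
    HasDerivAt (dualWeight (k + 1))
      (-(2 * ((k : ℝ) + 2)) * dualWeight (k + 1) u + ((k : ℝ) + 2) * dualWeight k u
        + ((k : ℝ) + 2) * dualWeight (k + 2) u) u := by
  have hnum : HasDerivAt (fun x : ℝ => ((k : ℝ) + 2) * x ^ (k + 1))
      (((k : ℝ) + 2) * (((k + 1 : ℕ) : ℝ) * u ^ k)) u := by
    simpa using (hasDerivAt_pow (k + 1) u).const_mul ((k : ℝ) + 2)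
  have hden : HasDerivAt (fun x : ℝ => (1 + x) ^ (k + 3))
      (((k + 3 : ℕ) : ℝ) * (1 + u) ^ (k + 2)) u := by
    simpa using ((hasDerivAt_id u).const_add 1).fun_pow (k + 3)
  have hform : dualWeight (k + 1) =
      fun x : ℝ => ((k : ℝ) + 2) * x ^ (k + 1) / (1 + x) ^ (k + 3) := by
    ext x; simp only [dualWeight]; push_cast; ring_nf
  rw [hform]
  refine (hnum.fun_div hden (pow_ne_zero _ hu)).congr_deriv ?_
  simp only [dualWeight]; push_cast; field_simp; ring

lemma continuousAt_dualWeight (k : ℕ) {u : ℝ} (hu : 1 + u ≠ 0) :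
    ContinuousAt (dualWeight k) u := by
  unfold dualWeight
  exact ContinuousAt.div (by fun_prop) (by fun_prop) (pow_ne_zero _ hu)

lemma dualWeight_nonneg (k : ℕ) {u : ℝ} (hu : 0 ≤ u) : 0 ≤ dualWeight k u := by
  unfold dualWeight; positivity

lemma dualWeight_le (k : ℕ) {u T : ℝ} (hu : 0 ≤ u) (huT : u ≤ T) :
    dualWeight k u ≤ ((k : ℝ) + 1) * (T / (1 + T)) ^ k := by
  have hq : u / (1 + u) ≤ T / (1 + T) := by
    rw [div_le_div_iff₀ (by linarith) (by linarith)]; nlinarith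
  calc dualWeight k u ≤ ((k : ℝ) + 1) * u ^ k / (1 + u) ^ k := by
        unfold dualWeight
        gcongr
        · linarith
        · omega
    _ = ((k : ℝ) + 1) * (u / (1 + u)) ^ k := by rw [div_pow]; ring
    _ ≤ ((k : ℝ) + 1) * (T / (1 + T)) ^ k := by gcongr

noncomputable def dualPairing (P : ℕ → ℝ → ℝ) (T : ℝ) (N : ℕ) (s : ℝ) : ℝ :=
  ∑ k ∈ Finset.range N, dualWeight k (T - s) * P (k + 1) s

noncomputable def truncationFlux (P : ℕ → ℝ → ℝ) (T : ℝ) (M : ℕ) (t : ℝ) : ℝ :=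
  ((M : ℝ) + 3) * dualWeight (M + 1) (T - t) * P (M + 3) t
    - ((M : ℝ) + 2) * dualWeight (M + 2) (T - t) * P (M + 2) t

lemma dualPairing_succ (P : ℕ → ℝ → ℝ) (T : ℝ) (N : ℕ) :
    dualPairing P T (N + 1) =
      fun s => dualPairing P T N s + dualWeight N (T - s) * P (N + 1) s := by
  ext s; exact Finset.sum_range_succ _ N

lemma dualPairing_self (P : ℕ → ℝ → ℝ) (T : ℝ) {N : ℕ} (hN : 1 ≤ N) :
    dualPairing P T N T = P 1 T := by
  rw [dualPairing, Finset.sum_eq_single_of_mem 0 (Finset.mem_range.mpr hN)]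
  · simp [dualWeight]
  · intro k _ hk
    simp [dualWeight, zero_pow hk]

lemma dualPairing_zero {P : ℕ → ℝ → ℝ} (hinit2 : P 2 0 = 1)
    (hinit : ∀ n, 1 ≤ n → n ≠ 2 → P n 0 = 0) (T : ℝ) {N : ℕ} (hN : 2 ≤ N) :
    dualPairing P T N 0 = 2 * T / (1 + T) ^ 3 := by
  rw [dualPairing, Finset.sum_eq_single_of_mem 1 (Finset.mem_range.mpr hN)]
  · norm_num [dualWeight, hinit2]
  · intro k _ hk
    rw [hinit (k + 1) (by omega) (by omega), mul_zero]

lemma hasDerivWithinAt_dualPairing {P : ℕ → ℝ → ℝ}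
    (hP1' : ∀ t, 0 ≤ t → HasDerivWithinAt (P 1) (2 * P 2 t) (Ici 0) t)
    (hP2' : ∀ t, 0 ≤ t → HasDerivWithinAt (P 2) (-4 * P 2 t + 3 * P 3 t) (Ici 0) t)
    (hPn' : ∀ n : ℕ, 3 ≤ n → ∀ t, 0 ≤ t → HasDerivWithinAt (P n)
      (-(2 * n) * P n t + (n + 1) * P (n + 1) t + (n - 1) * P (n - 1) t) (Ici 0) t)
    (M : ℕ) {T t : ℝ} (ht0 : 0 ≤ t) (htT : t ≤ T) :
    HasDerivWithinAt (dualPairing P T (M + 2))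
      (2 / (1 + (T - t)) ^ 3 * P 1 t + truncationFlux P T M t) (Ici 0) t := by
  have hu : 1 + (T - t) ≠ 0 := by linarith
  have hweight : ∀ (k : ℕ) {d : ℝ}, HasDerivAt (dualWeight k) d (T - t) →
      HasDerivWithinAt (fun s => dualWeight k (T - s)) (-d) (Ici 0) t :=
    fun k d hd => (hd.comp_const_sub T t).hasDerivWithinAt
  induction M with
  | zero =>
    have h := ((hweight 0 (hasDerivAt_dualWeight_zero hu)).fun_mul (hP1' t ht0)).fun_add
      ((hweight 1 (hasDerivAt_dualWeight_succ 0 hu)).fun_mul (hP2' t ht0))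
    simp only [dualPairing_succ, dualPairing, Finset.sum_range_one, Nat.reduceAdd]
    refine h.congr_deriv ?_
    simp only [truncationFlux]; push_cast; ring
  | succ M ih =>
    have hPM := hPn' (M + 3) (by omega) t ht0
    simp only [show M + 3 - 1 = M + 2 by omega] at hPM
    have h := ih.fun_add
      ((hweight (M + 2) (hasDerivAt_dualWeight_succ (M + 1) hu)).fun_mul hPM)
    rw [show M + 1 + 2 = M + 2 + 1 by omega, dualPairing_succ]
    refine h.congr_deriv ?_
    simp only [truncationFlux]; push_cast; ring

lemma continuousOn_of_kolmogorov {P : ℕ → ℝ → ℝ}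
    (hP1' : ∀ t, 0 ≤ t → HasDerivWithinAt (P 1) (2 * P 2 t) (Ici 0) t)
    (hP2' : ∀ t, 0 ≤ t → HasDerivWithinAt (P 2) (-4 * P 2 t + 3 * P 3 t) (Ici 0) t)
    (hPn' : ∀ n : ℕ, 3 ≤ n → ∀ t, 0 ≤ t → HasDerivWithinAt (P n)
      (-(2 * n) * P n t + (n + 1) * P (n + 1) t + (n - 1) * P (n - 1) t) (Ici 0) t)
    {n : ℕ} (hn : 1 ≤ n) : ContinuousOn (P n) (Ici 0) := by
  intro t ht
  rcases (show n = 1 ∨ n = 2 ∨ 3 ≤ n by omega) with rfl | rfl | hn3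
  · exact (hP1' t ht).continuousWithinAt
  · exact (hP2' t ht).continuousWithinAt
  · exact (hPn' n hn3 t ht).continuousWithinAt

lemma renewal_defect_eq_integral_truncationFlux {P : ℕ → ℝ → ℝ}
    (hP1' : ∀ t, 0 ≤ t → HasDerivWithinAt (P 1) (2 * P 2 t) (Ici 0) t)
    (hP2' : ∀ t, 0 ≤ t → HasDerivWithinAt (P 2) (-4 * P 2 t + 3 * P 3 t) (Ici 0) t)
    (hPn' : ∀ n : ℕ, 3 ≤ n → ∀ t, 0 ≤ t → HasDerivWithinAt (P n)
      (-(2 * n) * P n t + (n + 1) * P (n + 1) t + (n - 1) * P (n - 1) t) (Ici 0) t)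
    (hinit2 : P 2 0 = 1) (hinit : ∀ n, 1 ≤ n → n ≠ 2 → P n 0 = 0) {T : ℝ} (hT : 0 ≤ T)
    (M : ℕ) :
    P 1 T - (2 * T / (1 + T) ^ 3 + ∫ y in (0 : ℝ)..T, 2 / (1 + (T - y)) ^ 3 * P 1 y)
      = ∫ t in (0 : ℝ)..T, truncationFlux P T M t := by
  have hderiv : ∀ t ∈ Icc 0 T, HasDerivWithinAt (dualPairing P T (M + 2))
      (2 / (1 + (T - t)) ^ 3 * P 1 t + truncationFlux P T M t) (Ici 0) t :=
    fun t ht => hasDerivWithinAt_dualPairing hP1' hP2' hPn' M ht.1 ht.2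
  have hP : ∀ n, 1 ≤ n → ContinuousOn (P n) (Icc 0 T) := fun n hn =>
    (continuousOn_of_kolmogorov hP1' hP2' hPn' hn).mono Icc_subset_Ici_self
  have hw : ∀ k, ContinuousOn (fun t => dualWeight k (T - t)) (Icc 0 T) := fun k t ht =>
    ((continuousAt_dualWeight k (by linarith [ht.2])).comp
      (continuous_sub_left T).continuousAt).continuousWithinAt
  have hkernel : ContinuousOn (fun t => 2 / (1 + (T - t)) ^ 3 * P 1 t) (Icc 0 T) := by
    refine ContinuousOn.mul ?_ (hP 1 le_rfl)
    exact continuousOn_const.div (by fun_prop) fun t ht =>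
      pow_ne_zero _ (by linarith [ht.2])
  have hflux : ContinuousOn (truncationFlux P T M) (Icc 0 T) :=
    ((continuousOn_const.mul (hw _)).mul (hP _ (by omega))).sub
      ((continuousOn_const.mul (hw _)).mul (hP _ (by omega)))
  have hFTC := integral_eq_sub_of_hasDeriv_right_of_le hT
    (fun t ht => (hderiv t ht).continuousWithinAt.mono Icc_subset_Ici_self)
    (fun t ht => (hderiv t (Ioo_subset_Icc_self ht)).mono (Ioi_subset_Ici ht.1.le))
    ((hkernel.add hflux).intervalIntegrable_of_Icc hT)
  rw [integral_add (hkernel.intervalIntegrable_of_Icc hT) (hflux.intervalIntegrable_of_Icc hT),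
    dualPairing_self P T (by omega), dualPairing_zero hinit2 hinit T (by omega)] at hFTC
  linarith

lemma abs_truncationFlux_le {P : ℕ → ℝ → ℝ}
    (hrange : ∀ n, 1 ≤ n → ∀ t, 0 ≤ t → P n t ∈ Icc (0:ℝ) 1) (M : ℕ) {T t : ℝ}
    (ht0 : 0 ≤ t) (htT : t ≤ T) :
    |truncationFlux P T M t| ≤ ((M : ℝ) + 3) ^ 2 * (T / (1 + T)) ^ (M + 1) := by
  set r := T / (1 + T)
  have hr0 : 0 ≤ r := div_nonneg (by linarith) (by linarith)
  have hr1 : r ≤ 1 := by rw [div_le_one (by linarith)]; linarith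
  have hu : 0 ≤ T - t := by linarith
  have hterm : ∀ k n, 1 ≤ n →
      0 ≤ dualWeight k (T - t) * P n t ∧
        dualWeight k (T - t) * P n t ≤ ((k : ℝ) + 1) * r ^ k :=
    fun k n hn => by
      obtain ⟨hp0, hp1⟩ := hrange n hn t ht0
      exact ⟨mul_nonneg (dualWeight_nonneg k hu) hp0,
        (mul_le_of_le_one_right (dualWeight_nonneg k hu) hp1).trans
          (dualWeight_le k hu (by linarith))⟩
  obtain ⟨hX0, hX⟩ := hterm (M + 1) (M + 3) (by omega)
  obtain ⟨hY0, hY⟩ := hterm (M + 2) (M + 2) (by omega)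
  have hpow : r ^ (M + 2) ≤ r ^ (M + 1) := pow_le_pow_of_le_one hr0 hr1 (by omega)
  push_cast at hX hY
  simp only [truncationFlux, mul_assoc]
  rw [abs_sub_le_iff]
  constructor <;> nlinarith

lemma tendsto_add_sq_mul_pow_of_lt_one (c : ℝ) {r : ℝ} (hr0 : 0 ≤ r) (hr1 : r < 1) :
    Tendsto (fun n : ℕ => ((n : ℝ) + c) ^ 2 * r ^ n) atTop (𝓝 0) := by
  have h := (tendsto_pow_const_mul_const_pow_of_lt_one 2 hr0 hr1).add
    (((tendsto_pow_const_mul_const_pow_of_lt_one 1 hr0 hr1).const_mul (2 * c)).add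
      ((tendsto_pow_const_mul_const_pow_of_lt_one 0 hr0 hr1).const_mul (c ^ 2)))
  simp only [mul_zero, add_zero] at h
  exact h.congr fun n => by ring

end RenewalEquation

open RenewalEquation in
theorem renewal_equation_of_kolmogorov_system_general
    (P : ℕ → ℝ → ℝ)
    (hrange : ∀ n, 1 ≤ n → ∀ t, 0 ≤ t → P n t ∈ Icc (0:ℝ) 1)
    (hP1' : ∀ t, 0 ≤ t → HasDerivWithinAt (P 1) (2 * P 2 t) (Ici 0) t)
    (hP2' : ∀ t, 0 ≤ t → HasDerivWithinAt (P 2) (-4 * P 2 t + 3 * P 3 t) (Ici 0) t)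
    (hPn' : ∀ n, 3 ≤ n → ∀ t, 0 ≤ t → HasDerivWithinAt (P n)
      (-(2 * n) * P n t + (n + 1) * P (n + 1) t + (n - 1) * P (n - 1) t) (Ici 0) t)
    (hinit2 : P 2 0 = 1)
    (hinit : ∀ n, 1 ≤ n → n ≠ 2 → P n 0 = 0) :
    ∀ t, 0 ≤ t →
      P 1 t = 2 * t / (1 + t) ^ 3
        + ∫ y in (0:ℝ)..t, 2 / (1 + (t - y)) ^ 3 * P 1 y := by
  intro T hT
  set r := T / (1 + T)
  have hr0 : 0 ≤ r := div_nonneg hT (by linarith)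
  have hr1 : r < 1 := by rw [div_lt_one (by linarith)]; linarith
  have hdefect : ∀ M : ℕ, |P 1 T - (2 * T / (1 + T) ^ 3
      + ∫ y in (0:ℝ)..T, 2 / (1 + (T - y)) ^ 3 * P 1 y)|
        ≤ ((M : ℝ) + 3) ^ 2 * r ^ (M + 1) * T := by
    intro M
    have hflux : ∀ t ∈ uIoc 0 T,
        ‖truncationFlux P T M t‖ ≤ ((M : ℝ) + 3) ^ 2 * r ^ (M + 1) := by
      intro t ht
      rw [uIoc_of_le hT] at ht
      exact (Real.norm_eq_abs _).trans_le (abs_truncationFlux_le hrange M ht.1.le ht.2)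
    rw [renewal_defect_eq_integral_truncationFlux hP1' hP2' hPn' hinit2 hinit hT M,
      ← Real.norm_eq_abs]
    simpa [abs_of_nonneg hT] using norm_integral_le_of_norm_le_const hflux
  have hbound : Tendsto (fun M : ℕ => ((M : ℝ) + 3) ^ 2 * r ^ (M + 1) * T) atTop (𝓝 0) := by
    have h := ((tendsto_add_sq_mul_pow_of_lt_one 2 hr0 hr1).comp
      (tendsto_add_atTop_nat 1)).mul_const T
    rw [zero_mul] at h
    exact h.congr fun M => by simp only [Function.comp_apply]; push_cast; ring
  linarith [abs_nonpos_iff.mp (ge_of_tendsto' hbound hdefect)]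

/-- If `(Pₙ)ₙ≥₁` is a sequence of continuously differentiable functions with
values in `[0,1]`, total mass at most `1`, satisfying the forward Kolmogorov
system `P₁′ = 2P₂`, `P₂′ = -4P₂ + 3P₃`, `Pₙ′ = -2nPₙ + (n+1)Pₙ₊₁ + (n-1)Pₙ₋₁`
for `n ≥ 3`, with `P₂(0) = 1` and `Pₙ(0) = 0` for `n ≠ 2`, then `P₁` satisfies
the renewal equation `P₁(t) = 2t/(1+t)³ + ∫₀ᵗ 2/(1+(t-y))³ P₁(y) dy`. -/
theorem renewal_equation_of_kolmogorov_system
    (P : ℕ → ℝ → ℝ)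
    (hsmooth : ∀ n, 1 ≤ n → ContDiffOn ℝ 1 (P n) (Ici 0))
    (hrange : ∀ n, 1 ≤ n → ∀ t, 0 ≤ t → P n t ∈ Icc (0:ℝ) 1)
    (hsum : ∀ t, 0 ≤ t → ∀ S : Finset ℕ,
      (∑ n ∈ S.filter (fun n => 1 ≤ n), P n t) ≤ 1)
    (hP1' : ∀ t, 0 ≤ t → HasDerivWithinAt (P 1) (2 * P 2 t) (Ici 0) t)
    (hP2' : ∀ t, 0 ≤ t → HasDerivWithinAt (P 2) (-4 * P 2 t + 3 * P 3 t) (Ici 0) t)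
    (hPn' : ∀ n, 3 ≤ n → ∀ t, 0 ≤ t → HasDerivWithinAt (P n)
      (-(2 * n) * P n t + (n + 1) * P (n + 1) t + (n - 1) * P (n - 1) t) (Ici 0) t)
    (hinit2 : P 2 0 = 1)
    (hinit : ∀ n, 1 ≤ n → n ≠ 2 → P n 0 = 0) :
    ∀ t, 0 ≤ t →
      P 1 t = 2 * t / (1 + t) ^ 3
        + ∫ y in (0:ℝ)..t, 2 / (1 + (t - y)) ^ 3 * P 1 y :=
  renewal_equation_of_kolmogorov_system_general P hrange hP1' hP2' hPn' hinit2 hinit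
end

section
/- Let P(s,t) be continuously differentiable in both variables for s ∈ [0,1), t ≥ 0, satisfying the partial differential equation ∂P/∂t (s,t) = −(s−1)² P₁(t) + (s−1)² ∂P/∂s (s,t) with initial condition P(s,0) = s², where P₁(t) = limit of ∂P/∂s(s,t) as s → 0 (equivalently P₁ is a given continuous function appearing in the PDE). Then for all s ∈ [0,1) and t ≥ 0: P(s,t) − ((s − (s−1)t)/(1 − t(s−1)))² = ∫₀ᵗ −1/(y − t + 1/(s−1))² · P₁(y) dy. -/
open MeasureTheory Set

/-!
Along a curve `γ` with `γ' = -(γ - 1)²` the two `∂P/∂s` terms cancel, so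
`y ↦ P (γ y) y` has derivative `-(γ y - 1)² P₁ y`.  The characteristic curve through `(s, t)`
is `y ↦ h(s, y - t)` with `h(s, x) = 1 + 1/(x + 1/(s-1))`; it stays in `[0, 1)` for `y ∈ [0, t]`
and starts at `h(s, -t) = (s - (s-1)t)/(1 - t(s-1))`, where `P` is known from the initial
condition.  Integrating from `0` to `t` gives the formula.
-/

section Characteristics

variable {E : Type*} [NormedAddCommGroup E] [NormedSpace ℝ E]
  {f : ℝ → ℝ → E} {γ : ℝ → ℝ} {y γ' a : ℝ} {b : E}

theorem hasDerivAt_comp_curve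
    (hf : DifferentiableAt ℝ (fun p : ℝ × ℝ => f p.1 p.2) (γ y, y))
    (hγ : HasDerivAt γ γ' y) :
    HasDerivAt (fun z => f (γ z) z)
      (γ' • deriv (fun σ => f σ y) (γ y) + deriv (f (γ y)) y) y := by
  set L := fderiv ℝ (fun p : ℝ × ℝ => f p.1 p.2) (γ y, y)
  have hL : HasFDerivAt (fun p : ℝ × ℝ => f p.1 p.2) L (γ y, y) := hf.hasFDerivAt
  have hfst : deriv (fun σ => f σ y) (γ y) = L (1, 0) :=
    (hL.comp_hasDerivAt (f := fun σ => (σ, y)) (γ y)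
      ((hasDerivAt_id (γ y)).prodMk (hasDerivAt_const (γ y) y))).deriv
  have hsnd : deriv (f (γ y)) y = L (0, 1) :=
    (hL.comp_hasDerivAt (f := fun τ => (γ y, τ)) y
      ((hasDerivAt_const y (γ y)).prodMk (hasDerivAt_id y))).deriv
  have hsplit : ((γ', 1) : ℝ × ℝ) = γ' • ((1 : ℝ), (0 : ℝ)) + ((0 : ℝ), (1 : ℝ)) := by simp
  rw [hfst, hsnd, ← L.map_smul, ← map_add, ← hsplit]
  exact hL.comp_hasDerivAt (f := fun z => (γ z, z)) y (hγ.prodMk (hasDerivAt_id y))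

theorem hasDerivAt_comp_characteristic
    (hf : DifferentiableAt ℝ (fun p : ℝ × ℝ => f p.1 p.2) (γ y, y))
    (hγ : HasDerivAt γ (-a) y)
    (hpde : deriv (f (γ y)) y = b + a • deriv (fun σ => f σ y) (γ y)) :
    HasDerivAt (fun z => f (γ z) z) b y := by
  convert hasDerivAt_comp_curve hf hγ using 1
  rw [hpde, neg_smul]
  abel

end Characteristics

theorem one_div_sub_one_le_neg_one {s : ℝ} (hs : s ∈ Ico (0 : ℝ) 1) : 1 / (s - 1) ≤ -1 := by
  rw [div_le_iff_of_neg (by linarith [hs.2])]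
  linarith [hs.1]

noncomputable def charCurve (s x : ℝ) : ℝ := 1 + 1 / (x + 1 / (s - 1))

section charCurve

variable {s x t : ℝ}

theorem hasDerivAt_charCurve (hx : x + 1 / (s - 1) ≠ 0) :
    HasDerivAt (charCurve s) (-1 / (x + 1 / (s - 1)) ^ 2) x := by
  have hu : HasDerivAt (fun x => x + 1 / (s - 1)) 1 x := (hasDerivAt_id x).add_const _
  have h := (hu.inv hx).const_add 1
  simp only [← one_div] at h
  exact h

theorem charCurve_sub_one_sq : (charCurve s x - 1) ^ 2 = 1 / (x + 1 / (s - 1)) ^ 2 := by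
  simp [charCurve]

theorem charCurve_mem_Ico (hs : s ∈ Ico (0 : ℝ) 1) (hx : x ≤ 0) : charCurve s x ∈ Ico 0 1 := by
  have hu : x + 1 / (s - 1) ≤ -1 := by linarith [one_div_sub_one_le_neg_one hs]
  have h0 : 1 / (x + 1 / (s - 1)) < 0 := one_div_neg.mpr (by linarith)
  have h1 : -1 ≤ 1 / (x + 1 / (s - 1)) := by
    rw [le_div_iff_of_neg (by linarith)]
    linarith
  constructor <;> simp only [charCurve] <;> linarith

theorem charCurve_mem_Ioo (hs : s ∈ Ico (0 : ℝ) 1) (hx : x < 0) : charCurve s x ∈ Ioo 0 1 := by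
  have hu : x + 1 / (s - 1) < -1 := by linarith [one_div_sub_one_le_neg_one hs]
  have h0 : 1 / (x + 1 / (s - 1)) < 0 := one_div_neg.mpr (by linarith)
  have h1 : -1 < 1 / (x + 1 / (s - 1)) := by
    rw [lt_div_iff_of_neg (by linarith)]
    linarith
  constructor <;> simp only [charCurve] <;> linarith

theorem charCurve_zero (hs : s ≠ 1) : charCurve s 0 = s := by
  have : s - 1 ≠ 0 := sub_ne_zero.mpr hs
  simp [charCurve]

theorem charCurve_neg (hs : s ≠ 1) (ht : 1 - t * (s - 1) ≠ 0) :
    charCurve s (-t) = (s - (s - 1) * t) / (1 - t * (s - 1)) := by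
  have : s - 1 ≠ 0 := sub_ne_zero.mpr hs
  have hu : -t + 1 / (s - 1) = (1 - t * (s - 1)) / (s - 1) := by field_simp; ring
  rw [charCurve, hu, one_div_div, eq_div_iff ht, add_mul, div_mul_cancel₀ _ ht]
  ring

end charCurve

theorem hasDerivAt_along_charCurve {P : ℝ → ℝ → ℝ} {P₁ : ℝ → ℝ}
    (hP_smooth : ContDiffOn ℝ 1 (fun p : ℝ × ℝ => P p.1 p.2) (Ico 0 1 ×ˢ Ici 0))
    (hPDE : ∀ s ∈ Ico (0:ℝ) 1, ∀ t, 0 ≤ t →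
      deriv (fun τ => P s τ) t
        = -(s - 1) ^ 2 * P₁ t + (s - 1) ^ 2 * deriv (fun σ => P σ t) s)
    {s t y : ℝ} (hs : s ∈ Ico (0 : ℝ) 1) (hy : y ∈ Ioo 0 t) :
    HasDerivAt (fun y => P (charCurve s (y - t)) y)
      ((-1) / (y - t + 1 / (s - 1)) ^ 2 * P₁ y) y := by
  set γ : ℝ → ℝ := fun y => charCurve s (y - t)
  have hγy : γ y ∈ Ioo 0 1 := charCurve_mem_Ioo hs (sub_neg.mpr hy.2)
  have hinterior : Ico 0 1 ×ˢ Ici 0 ∈ nhds (γ y, y) :=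
    prod_mem_nhds (Ico_mem_nhds hγy.1 hγy.2) (Ici_mem_nhds hy.1)
  have hden : y - t + 1 / (s - 1) ≠ 0 := by
    linarith [one_div_sub_one_le_neg_one hs, hy.2]
  refine hasDerivAt_comp_characteristic (a := (γ y - 1) ^ 2)
    ((hP_smooth.contDiffAt hinterior).differentiableAt one_ne_zero) ?_ ?_
  · rw [charCurve_sub_one_sq, ← neg_div]
    exact (hasDerivAt_charCurve hden).comp_sub_const y t
  · rw [hPDE _ ⟨hγy.1.le, hγy.2⟩ y hy.1.le, charCurve_sub_one_sq, smul_eq_mul]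
    ring

theorem transport_pde_characteristics_general
    (P : ℝ → ℝ → ℝ) (P₁ : ℝ → ℝ)
    (hP₁_cont : ContinuousOn P₁ (Ici 0))
    (hP_smooth : ContDiffOn ℝ 1 (fun p : ℝ × ℝ => P p.1 p.2) (Ico 0 1 ×ˢ Ici 0))
    (hPDE : ∀ s ∈ Ico (0:ℝ) 1, ∀ t, 0 ≤ t →
      deriv (fun τ => P s τ) t
        = -(s - 1) ^ 2 * P₁ t + (s - 1) ^ 2 * deriv (fun σ => P σ t) s)
    (hinit : ∀ s ∈ Ico (0:ℝ) 1, P s 0 = s ^ 2) :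
    ∀ s ∈ Ico (0:ℝ) 1, ∀ t, 0 ≤ t →
      P s t - ((s - (s - 1) * t) / (1 - t * (s - 1))) ^ 2
        = ∫ y in (0:ℝ)..t, (-1) / (y - t + 1 / (s - 1)) ^ 2 * P₁ y := by
  intro s hs t ht
  set γ : ℝ → ℝ := fun y => charCurve s (y - t)
  have hden : ∀ y ≤ t, y - t + 1 / (s - 1) ≠ 0 := fun y hy =>
    by linarith [one_div_sub_one_le_neg_one hs]
  have hγ_cont : ContinuousOn γ (Icc 0 t) := fun y hy =>
    ((hasDerivAt_charCurve (hden y hy.2)).comp_sub_const y t).continuousAt.continuousWithinAt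
  have hg_cont : ContinuousOn (fun y => P (γ y) y) (Icc 0 t) :=
    hP_smooth.continuousOn.comp (hγ_cont.prodMk continuousOn_id)
      fun y hy => ⟨charCurve_mem_Ico hs (by linarith [hy.2]), hy.1⟩
  have hint : IntervalIntegrable (fun y => (-1) / (y - t + 1 / (s - 1)) ^ 2 * P₁ y) volume 0 t :=
    ((continuousOn_const.div (by fun_prop) fun y hy => pow_ne_zero 2 (hden y hy.2)).mul
      (hP₁_cont.mono fun y hy => hy.1)).intervalIntegrable_of_Icc ht
  have hstart : 1 - t * (s - 1) ≠ 0 := by nlinarith [hs.2]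
  rw [intervalIntegral.integral_eq_sub_of_hasDeriv_right_of_le ht hg_cont
    (fun y hy => (hasDerivAt_along_charCurve hP_smooth hPDE hs hy).hasDerivWithinAt) hint]
  simp only [γ, sub_self, zero_sub, charCurve_zero hs.2.ne]
  rw [hinit _ (charCurve_mem_Ico hs (neg_nonpos.mpr ht)), charCurve_neg hs.2.ne hstart]

/-- Solution by characteristics of the inhomogeneous transport equation
`∂P/∂t = -(s-1)² P₁(t) + (s-1)² ∂P/∂s` with `P(s,0) = s²`:
`P(s,t) - ((s-(s-1)t)/(1-t(s-1)))² = ∫₀ᵗ -1/(y-t+1/(s-1))² P₁(y) dy`. -/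
theorem transport_pde_characteristics
    (P : ℝ → ℝ → ℝ) (P₁ : ℝ → ℝ)
    (hP₁_cont : ContinuousOn P₁ (Ici 0))
    (hP₁_range : ∀ t, 0 ≤ t → P₁ t ∈ Icc (0:ℝ) 1)
    (hP_smooth : ContDiffOn ℝ 1 (fun p : ℝ × ℝ => P p.1 p.2) (Ico 0 1 ×ˢ Ici 0))
    (hPDE : ∀ s ∈ Ico (0:ℝ) 1, ∀ t, 0 ≤ t →
      deriv (fun τ => P s τ) t
        = -(s - 1) ^ 2 * P₁ t + (s - 1) ^ 2 * deriv (fun σ => P σ t) s)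
    (hinit : ∀ s ∈ Ico (0:ℝ) 1, P s 0 = s ^ 2) :
    ∀ s ∈ Ico (0:ℝ) 1, ∀ t, 0 ≤ t →
      P s t - ((s - (s - 1) * t) / (1 - t * (s - 1))) ^ 2
        = ∫ y in (0:ℝ)..t, (-1) / (y - t + 1 / (s - 1)) ^ 2 * P₁ y :=
  transport_pde_characteristics_general P P₁ hP₁_cont hP_smooth hPDE hinit
end

section
/- Let F : [0,∞) → ℝ be a cumulative distribution function of a nonnegative random variable (F nondecreasing, F(0) = 0, F(t) → 1 as t → ∞), continuously differentiable on [0,∞), satisfying the renewal equation F(t) = 2t/(1+t)³ + ∫₀ᵗ 2/(1+(t−y))³ · F(y) dy for all t ≥ 0. Then ∫₀ʰ t F′(t) dt ~ log(h) as h → ∞, i.e. (∫₀ʰ t F′(t) dt)/log(h) → 1 as h → ∞. -/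
open MeasureTheory Filter Set Function Asymptotics Topology

/-!
Write `D = 1 - F`. Integrating the renewal equation over `[0, H]` and exchanging the order of
integration over the triangle `0 ≤ y ≤ t ≤ H` turns it into the identity
`∫₀ᴴ D(y) / (1 + H - y)² dy = H / (1 + H)²`. Since `D` is nonincreasing, the left side is at least
`D(H) · H / (1 + H)`, so `D(h) ≤ 1 / (1 + h)` and `∫₀ˣ D ≤ log (1 + X)`. Integrating the identity
once more over `H ∈ [0, X]` gives `∫₀ˣ D(y) (X - y) / (1 + X - y) dy = log (1 + X) + 1 / (1 + X) - 1`,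
and as the weight is at most `1`, `∫₀ˣ D ≥ log (1 + X) - 1`. Finally
`∫₀ʰ t F'(t) dt = ∫₀ʰ D - h D(h)` with `0 ≤ h D(h) ≤ 1`, so the truncated mean is `log h + O(1)`.
-/

lemma integral_zero_eq_sub_of_hasDerivAt_of_nonneg {f f' : ℝ → ℝ} {a : ℝ} (ha : 0 ≤ a)
    (hf : ∀ x, 0 ≤ x → HasDerivAt f (f' x) x) (hf' : ContinuousOn f' (Ici 0)) :
    ∫ x in 0..a, f' x = f a - f 0 := by
  have hsub : uIcc 0 a ⊆ Ici 0 := fun x hx => (uIcc_of_le ha ▸ hx).1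
  exact intervalIntegral.integral_eq_sub_of_hasDerivAt (fun x hx => hf x (hsub hx))
    ((hf'.mono hsub).intervalIntegrable)

lemma integral_one_div_one_add (a : ℝ) (ha : 0 ≤ a) :
    ∫ s in 0..a, 1 / (1 + s) = Real.log (1 + a) := by
  rw [intervalIntegral.integral_comp_add_left (fun s : ℝ => 1 / s),
    integral_one_div (by rw [uIcc_of_le (by linarith)]; grind)]
  simp

lemma integral_one_div_one_add_pow_two (a : ℝ) (ha : 0 ≤ a) :
    ∫ s in 0..a, 1 / (1 + s) ^ 2 = a / (1 + a) := by
  have hderiv (x : ℝ) (hx : 0 ≤ x) :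
      HasDerivAt (fun s => s / (1 + s)) (1 / (1 + x) ^ 2) x := by
    have h1 : (1:ℝ) + x ≠ 0 := by positivity
    refine ((hasDerivAt_id' x).fun_div ((hasDerivAt_id' x).const_add 1) h1).congr_deriv ?_
    field_simp; ring
  have hcont : ContinuousOn (fun s : ℝ => 1 / (1 + s) ^ 2) (Ici 0) :=
    continuousOn_const.div (by fun_prop) fun x (hx : 0 ≤ x) => by positivity
  simpa using integral_zero_eq_sub_of_hasDerivAt_of_nonneg ha hderiv hcont

lemma integral_two_div_one_add_pow_three (a : ℝ) (ha : 0 ≤ a) :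
    ∫ s in 0..a, 2 / (1 + s) ^ 3 = 1 - 1 / (1 + a) ^ 2 := by
  have hderiv (x : ℝ) (hx : 0 ≤ x) :
      HasDerivAt (fun s => 1 - 1 / (1 + s) ^ 2) (2 / (1 + x) ^ 3) x := by
    have h1 : (1:ℝ) + x ≠ 0 := by positivity
    refine (((hasDerivAt_const x (1:ℝ)).fun_div (((hasDerivAt_id' x).const_add 1).fun_pow 2)
      (by positivity)).const_sub 1).congr_deriv ?_
    field_simp; ring
  have hcont : ContinuousOn (fun s : ℝ => 2 / (1 + s) ^ 3) (Ici 0) :=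
    continuousOn_const.div (by fun_prop) fun x (hx : 0 ≤ x) => by positivity
  simpa using integral_zero_eq_sub_of_hasDerivAt_of_nonneg ha hderiv hcont

lemma integral_two_mul_div_one_add_pow_three (a : ℝ) (ha : 0 ≤ a) :
    ∫ s in 0..a, 2 * s / (1 + s) ^ 3 = a ^ 2 / (1 + a) ^ 2 := by
  have hderiv (x : ℝ) (hx : 0 ≤ x) :
      HasDerivAt (fun s => s ^ 2 / (1 + s) ^ 2) (2 * x / (1 + x) ^ 3) x := by
    have h1 : (1:ℝ) + x ≠ 0 := by positivity
    refine (((hasDerivAt_id' x).fun_pow 2).fun_div (((hasDerivAt_id' x).const_add 1).fun_pow 2)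
      (by positivity)).congr_deriv ?_
    field_simp; ring
  have hcont : ContinuousOn (fun s : ℝ => 2 * s / (1 + s) ^ 3) (Ici 0) :=
    ContinuousOn.div (by fun_prop) (by fun_prop) fun x (hx : 0 ≤ x) => by positivity
  simpa using integral_zero_eq_sub_of_hasDerivAt_of_nonneg ha hderiv hcont

lemma integral_div_one_add_pow_two (a : ℝ) (ha : 0 ≤ a) :
    ∫ s in 0..a, s / (1 + s) ^ 2 = Real.log (1 + a) + 1 / (1 + a) - 1 := by
  have hderiv (x : ℝ) (hx : 0 ≤ x) :
      HasDerivAt (fun s => Real.log (1 + s) + 1 / (1 + s)) (x / (1 + x) ^ 2) x := by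
    have h1 : (1:ℝ) + x ≠ 0 := by positivity
    have hlin := (hasDerivAt_id' x).const_add 1
    refine ((hlin.log h1).fun_add ((hasDerivAt_const x (1:ℝ)).fun_div hlin h1)).congr_deriv ?_
    field_simp; ring
  have hcont : ContinuousOn (fun s : ℝ => s / (1 + s) ^ 2) (Ici 0) :=
    ContinuousOn.div (by fun_prop) (by fun_prop) fun x (hx : 0 ≤ x) => by positivity
  simpa using integral_zero_eq_sub_of_hasDerivAt_of_nonneg ha hderiv hcont

lemma integral_one_div_one_add_sub_pow_two (H : ℝ) (hH : 0 ≤ H) :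
    ∫ y in 0..H, 1 / (1 + (H - y)) ^ 2 = H / (1 + H) := by
  rw [intervalIntegral.integral_comp_sub_left (fun s => 1 / (1 + s) ^ 2), sub_self, sub_zero,
    integral_one_div_one_add_pow_two H hH]

lemma intervalIntegrable_div_one_add_sub_pow_two {G : ℝ → ℝ} {H : ℝ} (hH : 0 ≤ H)
    (hG : ContinuousOn G (Icc 0 H)) :
    IntervalIntegrable (fun y => G y / (1 + (H - y)) ^ 2) volume 0 H :=
  ContinuousOn.intervalIntegrable <| (uIcc_of_le hH ▸ hG).div (by fun_prop)
    fun y hy => by have : y ≤ H := (uIcc_of_le hH ▸ hy).2; positivity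

lemma integrableOn_indicator_le_of_continuousOn {g : ℝ × ℝ → ℝ} {H : ℝ}
    (hg : ContinuousOn g {p : ℝ × ℝ | 0 ≤ p.2 ∧ p.2 ≤ p.1 ∧ p.1 ≤ H}) :
    IntegrableOn ({p : ℝ × ℝ | p.2 ≤ p.1}.indicator g) (Ioc 0 H ×ˢ Ioc 0 H) := by
  have hT : IsCompact {p : ℝ × ℝ | 0 ≤ p.2 ∧ p.2 ≤ p.1 ∧ p.1 ≤ H} := by
    refine (isCompact_Icc.prod isCompact_Icc).of_isClosed_subset ?_
      (fun p hp => ⟨⟨hp.1.trans hp.2.1, hp.2.2⟩, ⟨hp.1, hp.2.1.trans hp.2.2⟩⟩)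
    exact (isClosed_le continuous_const continuous_snd).inter
      ((isClosed_le continuous_snd continuous_fst).inter
        (isClosed_le continuous_fst continuous_const))
  have hle : MeasurableSet {p : ℝ × ℝ | p.2 ≤ p.1} :=
    measurableSet_le measurable_snd measurable_fst
  rw [IntegrableOn, integrable_indicator_iff hle, IntegrableOn, Measure.restrict_restrict hle]
  refine (hg.integrableOn_compact hT).mono_set ?_
  rintro ⟨t, y⟩ ⟨hyt, ⟨-, htH⟩, hy, -⟩
  exact ⟨hy.le, hyt, htH⟩

lemma integral_integral_triangle_swap {g : ℝ → ℝ → ℝ} {H : ℝ} (hH : 0 ≤ H)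
    (hg : ContinuousOn (uncurry g) {p : ℝ × ℝ | 0 ≤ p.2 ∧ p.2 ≤ p.1 ∧ p.1 ≤ H}) :
    ∫ t in 0..H, ∫ y in 0..t, g t y = ∫ y in 0..H, ∫ t in y..H, g t y := by
  set G : ℝ → ℝ → ℝ := fun t y => {p : ℝ × ℝ | p.2 ≤ p.1}.indicator (uncurry g) (t, y)
  have hG_int : IntegrableOn (uncurry G) (uIoc 0 H ×ˢ uIoc 0 H) := by
    rw [uIoc_of_le hH]
    exact integrableOn_indicator_le_of_continuousOn hg
  have hleft : ∀ t ∈ uIoc 0 H, ∫ y in 0..H, G t y = ∫ y in 0..t, g t y := by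
    intro t ht
    rw [uIoc_of_le hH] at ht
    have hGt : G t = (Iic t).indicator (g t) := by ext y; simp [G, indicator]
    rw [hGt, intervalIntegral.integral_of_le hH, setIntegral_indicator measurableSet_Iic,
      Ioc_inter_Iic, min_eq_right ht.2, intervalIntegral.integral_of_le ht.1.le]
  have hright : ∀ y ∈ uIoc 0 H, ∫ t in 0..H, G t y = ∫ t in y..H, g t y := by
    intro y hy
    rw [uIoc_of_le hH] at hy
    have hGy : (G · y) = (Ici y).indicator (g · y) := by ext t; simp [G, indicator]
    have hset : Ioc 0 H ∩ Ici y = Icc y H := by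
      ext t; simp only [mem_inter_iff, mem_Ioc, mem_Ici, mem_Icc]
      constructor
      · exact fun ⟨⟨_, htH⟩, hyt⟩ => ⟨hyt, htH⟩
      · exact fun ⟨hyt, htH⟩ => ⟨⟨hy.1.trans_le hyt, htH⟩, hyt⟩
    rw [hGy, intervalIntegral.integral_of_le hH, setIntegral_indicator measurableSet_Ici, hset,
      integral_Icc_eq_integral_Ioc, intervalIntegral.integral_of_le hy.2]
  rw [← intervalIntegral.integral_congr_ae (ae_of_all _ hleft),
    intervalIntegral_intervalIntegral_swap hG_int,
    intervalIntegral.integral_congr_ae (ae_of_all _ hright)]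

lemma integral_integral_conv_eq {k f : ℝ → ℝ} {H : ℝ} (hH : 0 ≤ H)
    (hk : ContinuousOn k (Icc 0 H)) (hf : ContinuousOn f (Icc 0 H)) :
    ∫ t in 0..H, ∫ y in 0..t, k (t - y) * f y = ∫ y in 0..H, (∫ s in 0..H - y, k s) * f y := by
  rw [integral_integral_triangle_swap hH]
  · congr 1; ext y
    rw [intervalIntegral.integral_mul_const, intervalIntegral.integral_comp_sub_right, sub_self]
  · refine (hk.comp (by fun_prop) ?_).mul (hf.comp (by fun_prop) ?_)
    · exact fun p hp => ⟨sub_nonneg.2 hp.2.1, by linarith [hp.1, hp.2.2]⟩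
    · exact fun p hp => ⟨hp.1, hp.2.1.trans hp.2.2⟩

lemma tendsto_div_log_of_isBigO_sub_log {f : ℝ → ℝ}
    (hf : (fun x => f x - Real.log x) =O[atTop] fun _ => (1 : ℝ)) :
    Tendsto (fun x => f x / Real.log x) atTop (𝓝 1) :=
  (isEquivalent_iff_tendsto_one (Real.tendsto_log_atTop.eventually_ne_atTop 0)).mp
    (hf.trans_isLittleO Real.isLittleO_const_log_atTop)

lemma integral_mul_deriv_eq_integral_one_sub_sub {F F' : ℝ → ℝ}
    (hderiv : ∀ t, 0 ≤ t → HasDerivWithinAt F (F' t) (Ici 0) t)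
    (hcont : ContinuousOn F' (Ici 0)) {h : ℝ} (hh : 0 ≤ h) :
    ∫ t in 0..h, t * F' t = (∫ t in 0..h, (1 - F t)) - h * (1 - F h) := by
  have hsub : uIcc 0 h ⊆ Ici 0 := fun x hx => (uIcc_of_le hh ▸ hx).1
  have hFint : IntervalIntegrable F volume 0 h :=
    ContinuousOn.intervalIntegrable fun t ht => ((hderiv t (hsub ht)).continuousWithinAt).mono hsub
  rw [intervalIntegral.integral_mul_deriv_eq_deriv_mul_of_hasDerivWithinAt
      (fun x _ => (hasDerivAt_id' x).hasDerivWithinAt)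
      (fun x hx => (hderiv x (hsub hx)).mono hsub)
      intervalIntegrable_const ((hcont.mono hsub).intervalIntegrable),
    intervalIntegral.integral_sub intervalIntegrable_const hFint]
  simp only [zero_mul, sub_zero, one_mul, intervalIntegral.integral_const, smul_eq_mul, mul_one]
  ring

section Renewal

variable {F : ℝ → ℝ} (hF : ContinuousOn F (Ici 0))
  (hrenewal : ∀ t, 0 ≤ t →
    F t = 2 * t / (1 + t) ^ 3 + ∫ y in (0:ℝ)..t, 2 / (1 + (t - y)) ^ 3 * F y)

include hF hrenewal

lemma integral_div_one_add_sub_pow_two_eq {H : ℝ} (hH : 0 ≤ H) :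
    ∫ y in 0..H, F y / (1 + (H - y)) ^ 2 = H ^ 2 / (1 + H) ^ 2 := by
  have hsub : uIcc 0 H ⊆ Ici 0 := fun x hx => (uIcc_of_le hH ▸ hx).1
  have hFint : IntervalIntegrable F volume 0 H := (hF.mono hsub).intervalIntegrable
  have hconv := integral_integral_conv_eq hH (k := fun s => 2 / (1 + s) ^ 3)
    (continuousOn_const.div (by fun_prop) fun s hs => by have := hs.1; positivity)
    (hF.mono Icc_subset_Ici_self)
  have hsource : IntervalIntegrable (fun t => 2 * t / (1 + t) ^ 3) volume 0 H :=
    ContinuousOn.intervalIntegrable <| ContinuousOn.div (by fun_prop) (by fun_prop)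
      fun t ht => by have : (0:ℝ) ≤ t := hsub ht; positivity
  have hlhs : ∫ t in 0..H, ∫ y in 0..t, 2 / (1 + (t - y)) ^ 3 * F y
      = (∫ t in 0..H, F t) - H ^ 2 / (1 + H) ^ 2 := by
    rw [← integral_two_mul_div_one_add_pow_three H hH,
      ← intervalIntegral.integral_sub hFint hsource]
    refine intervalIntegral.integral_congr fun t ht => ?_
    rw [hrenewal t (hsub ht)]
    ring
  have hrhs : ∫ y in 0..H, (∫ s in 0..H - y, 2 / (1 + s) ^ 3) * F y
      = (∫ y in 0..H, F y) - ∫ y in 0..H, F y / (1 + (H - y)) ^ 2 := by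
    rw [← intervalIntegral.integral_sub hFint
      (intervalIntegrable_div_one_add_sub_pow_two hH (hF.mono Icc_subset_Ici_self))]
    refine intervalIntegral.integral_congr fun y hy => ?_
    rw [integral_two_div_one_add_pow_three _ (sub_nonneg.2 (uIcc_of_le hH ▸ hy).2)]
    ring
  linarith

lemma integral_one_sub_div_one_add_sub_pow_two_eq {H : ℝ} (hH : 0 ≤ H) :
    ∫ y in 0..H, (1 - F y) / (1 + (H - y)) ^ 2 = H / (1 + H) ^ 2 := by
  simp only [sub_div]
  rw [intervalIntegral.integral_sub
      (intervalIntegrable_div_one_add_sub_pow_two hH continuousOn_const)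
      (intervalIntegrable_div_one_add_sub_pow_two hH (hF.mono Icc_subset_Ici_self)),
    integral_one_div_one_add_sub_pow_two H hH, integral_div_one_add_sub_pow_two_eq hF hrenewal hH]
  field_simp
  ring

lemma one_sub_le_one_div_one_add (hmono : MonotoneOn F (Ici 0)) {h : ℝ} (hh : 0 ≤ h) :
    1 - F h ≤ 1 / (1 + h) := by
  rcases hh.eq_or_lt with rfl | hpos
  · simp [hrenewal 0 le_rfl]
  have hFc : ContinuousOn F (Icc 0 h) := hF.mono Icc_subset_Ici_self
  have hconst : ∫ y in 0..h, (1 - F h) / (1 + (h - y)) ^ 2 = (1 - F h) * (h / (1 + h)) := by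
    simp_rw [div_eq_mul_one_div (1 - F h)]
    rw [intervalIntegral.integral_const_mul, integral_one_div_one_add_sub_pow_two h hh]
  have hmono_int : ∫ y in 0..h, (1 - F h) / (1 + (h - y)) ^ 2
      ≤ ∫ y in 0..h, (1 - F y) / (1 + (h - y)) ^ 2 := by
    refine intervalIntegral.integral_mono_on hh
      (intervalIntegrable_div_one_add_sub_pow_two hh continuousOn_const)
      (intervalIntegrable_div_one_add_sub_pow_two hh (continuousOn_const.sub hFc))
      fun y hy => div_le_div_of_nonneg_right ?_ (by positivity)
    linarith [hmono hy.1 hh hy.2]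
  rw [hconst, integral_one_sub_div_one_add_sub_pow_two_eq hF hrenewal hh] at hmono_int
  refine le_of_mul_le_mul_right ?_ (by positivity : 0 < h / (1 + h))
  calc (1 - F h) * (h / (1 + h)) ≤ h / (1 + h) ^ 2 := hmono_int
    _ = 1 / (1 + h) * (h / (1 + h)) := by field_simp

lemma integral_one_sub_le_log (hmono : MonotoneOn F (Ici 0)) {X : ℝ} (hX : 0 ≤ X) :
    ∫ y in 0..X, (1 - F y) ≤ Real.log (1 + X) := by
  have hsub : uIcc 0 X ⊆ Ici 0 := fun x hx => (uIcc_of_le hX ▸ hx).1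
  rw [← integral_one_div_one_add X hX]
  refine intervalIntegral.integral_mono_on hX
    ((continuousOn_const.sub (hF.mono hsub)).intervalIntegrable)
    (ContinuousOn.intervalIntegrable <| continuousOn_const.div (by fun_prop)
      fun y hy => by have : (0:ℝ) ≤ y := hsub hy; positivity)
    fun y hy => one_sub_le_one_div_one_add hF hrenewal hmono hy.1

lemma log_le_integral_one_sub (hF1 : ∀ t, 0 ≤ t → F t ≤ 1) {X : ℝ} (hX : 0 ≤ X) :
    Real.log (1 + X) + 1 / (1 + X) - 1 ≤ ∫ y in 0..X, (1 - F y) := by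
  have hsub : uIcc 0 X ⊆ Icc 0 X := (uIcc_of_le hX).subset
  have htail : ContinuousOn (fun y => 1 - F y) (Icc 0 X) :=
    continuousOn_const.sub (hF.mono Icc_subset_Ici_self)
  have hconv := integral_integral_conv_eq hX (k := fun s => 1 / (1 + s) ^ 2)
    (continuousOn_const.div (by fun_prop) fun s hs => by have := hs.1; positivity) htail
  calc Real.log (1 + X) + 1 / (1 + X) - 1 = ∫ H in 0..X, H / (1 + H) ^ 2 :=
        (integral_div_one_add_pow_two X hX).symm
    _ = ∫ H in 0..X, ∫ y in 0..H, 1 / (1 + (H - y)) ^ 2 * (1 - F y) := by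
        refine intervalIntegral.integral_congr fun H hH => ?_
        rw [← integral_one_sub_div_one_add_sub_pow_two_eq hF hrenewal (hsub hH).1]
        simp only [one_div_mul_eq_div]
    _ = ∫ y in 0..X, (X - y) / (1 + (X - y)) * (1 - F y) := by
        rw [hconv]
        refine intervalIntegral.integral_congr fun y hy => ?_
        rw [integral_one_div_one_add_pow_two _ (sub_nonneg.2 (hsub hy).2)]
    _ ≤ ∫ y in 0..X, (1 - F y) := by
        refine intervalIntegral.integral_mono_on hX ?_ (htail.intervalIntegrable_of_Icc hX)
          fun y hy => ?_
        · refine ContinuousOn.intervalIntegrable_of_Icc hX (ContinuousOn.mul ?_ htail)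
          exact ContinuousOn.div (by fun_prop) (by fun_prop) fun y hy => by linarith [hy.2]
        · have h1 : (X - y) / (1 + (X - y)) ≤ 1 := by
            rw [div_le_one (by linarith [hy.2])]; linarith
          nlinarith [hF1 y hy.1]

lemma abs_integral_one_sub_sub_log_le (hmono : MonotoneOn F (Ici 0))
    (hF1 : ∀ t, 0 ≤ t → F t ≤ 1) {h : ℝ} (hh : 1 ≤ h) :
    |(∫ y in 0..h, (1 - F y)) - h * (1 - F h) - Real.log h| ≤ 2 := by
  have hh0 : 0 ≤ h := by linarith
  have hlower := log_le_integral_one_sub hF hrenewal hF1 hh0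
  have hupper := integral_one_sub_le_log hF hrenewal hmono hh0
  have htail : h * (1 - F h) ≤ h / (1 + h) :=
    (mul_le_mul_of_nonneg_left (one_sub_le_one_div_one_add hF hrenewal hmono hh0) hh0).trans_eq
      (mul_one_div h (1 + h))
  have htail_nonneg : 0 ≤ h * (1 - F h) := mul_nonneg hh0 (by linarith [hF1 h hh0])
  have hfrac : h / (1 + h) ≤ 1 := by rw [div_le_one (by positivity)]; linarith
  have hinv : 0 ≤ 1 / (1 + h) := by positivity
  have hlog_le : Real.log h ≤ Real.log (1 + h) := Real.log_le_log (by positivity) (by linarith)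
  have hle_log : Real.log (1 + h) ≤ Real.log h + 1 := by
    calc Real.log (1 + h) ≤ Real.log (2 * h) := Real.log_le_log (by positivity) (by linarith)
      _ = Real.log 2 + Real.log h := Real.log_mul (by norm_num) (by positivity)
      _ ≤ Real.log h + 1 := by linarith [Real.log_two_lt_d9]
  rw [abs_le]
  constructor <;> linarith

end Renewal

theorem truncated_first_moment_asymptotic_general
    (F F' : ℝ → ℝ)
    (hmono : ∀ a b : ℝ, 0 ≤ a → a ≤ b → F a ≤ F b)
    (hlim : Filter.Tendsto F atTop (nhds 1))
    (hderiv : ∀ t, 0 ≤ t → HasDerivWithinAt F (F' t) (Ici 0) t)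
    (hcont : ContinuousOn F' (Ici 0))
    (hrenewal : ∀ t, 0 ≤ t →
      F t = 2 * t / (1 + t) ^ 3 + ∫ y in (0:ℝ)..t, 2 / (1 + (t - y)) ^ 3 * F y) :
    Filter.Tendsto
      (fun h : ℝ => (∫ t in (0:ℝ)..h, t * F' t) / Real.log h)
      atTop (nhds 1) := by
  have hF : ContinuousOn F (Ici 0) := fun t ht => (hderiv t ht).continuousWithinAt
  have hmono' : MonotoneOn F (Ici 0) := fun a ha b _ hab => hmono a b ha hab
  have hF1 : ∀ t, 0 ≤ t → F t ≤ 1 := fun t ht =>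
    ge_of_tendsto hlim ((eventually_ge_atTop t).mono fun b hb => hmono t b ht hb)
  refine tendsto_div_log_of_isBigO_sub_log (IsBigO.of_bound 2 ?_)
  filter_upwards [eventually_ge_atTop 1] with h hh
  rw [integral_mul_deriv_eq_integral_one_sub_sub hderiv hcont (by linarith), norm_one, mul_one,
    Real.norm_eq_abs]
  exact abs_integral_one_sub_sub_log_le hF hrenewal hmono' hF1 hh

/-- For the CDF `F` solving the renewal equation,
`∫₀ʰ t F'(t) dt ~ log h` as `h → ∞`. -/
theorem truncated_first_moment_asymptotic
    (F F' : ℝ → ℝ)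
    (hmono : ∀ a b : ℝ, 0 ≤ a → a ≤ b → F a ≤ F b)
    (hzero : F 0 = 0)
    (hlim : Filter.Tendsto F atTop (nhds 1))
    (hderiv : ∀ t, 0 ≤ t → HasDerivWithinAt F (F' t) (Ici 0) t)
    (hcont : ContinuousOn F' (Ici 0))
    (hrenewal : ∀ t, 0 ≤ t →
      F t = 2 * t / (1 + t) ^ 3 + ∫ y in (0:ℝ)..t, 2 / (1 + (t - y)) ^ 3 * F y) :
    Filter.Tendsto
      (fun h : ℝ => (∫ t in (0:ℝ)..h, t * F' t) / Real.log h)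
      atTop (nhds 1) :=
  truncated_first_moment_asymptotic_general F F' hmono hlim hderiv hcont hrenewal
end

section
/- Let F : [0,∞) → ℝ be a cumulative distribution function of a nonnegative random variable (F nondecreasing, F(0) = 0, F(t) → 1 as t → ∞), continuously differentiable on [0,∞), satisfying the renewal equation F(t) = 2t/(1+t)³ + ∫₀ᵗ 2/(1+(t−y))³ · F(y) dy for all t ≥ 0. Then ∫₀ᵗ u(1−F(u)) du ~ t as t → ∞, i.e. (∫₀ᵗ u(1−F(u)) du)/t → 1 as t → ∞. -/
/-!
Integrating the renewal equation over `[0, T]` and exchanging the order of integration gives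
`∫₀ᵀ (1 - F y) / (1 + T - y)² dy = T / (1 + T)²`. Since `1 - F` is nonincreasing, it is at
least `1 - F T` on `[0, T]`, whence `1 - F T ≤ 1 / (1 + T)`. Inserting this bound on `[0, T - 1]`
and bounding `1 - F` by `1 - F (T - 1)` on `[T - 1, T]` gives `1 - F (T - 1) ≥ 1 / T + o(1 / T)`.
Hence `u (1 - F u) → 1`, and so does its Cesàro mean.
-/

open MeasureTheory Filter Set Topology

theorem tendsto_add_div_add_atTop (a b : ℝ) :
    Tendsto (fun s : ℝ => (s + a) / (s + b)) atTop (𝓝 1) := by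
  have h : Tendsto (fun s : ℝ => 1 + (a - b) / (s + b)) atTop (𝓝 (1 + 0)) :=
    tendsto_const_nhds.add
      (tendsto_const_nhds.div_atTop (tendsto_atTop_add_const_right _ b tendsto_id))
  rw [add_zero] at h
  refine h.congr' ?_
  filter_upwards [eventually_gt_atTop (-b)] with s hs
  have : s + b ≠ 0 := by linarith
  field_simp
  ring

theorem tendsto_integral_div_of_tendsto {φ : ℝ → ℝ} {L : ℝ}
    (hφ : ∀ t, 0 ≤ t → IntervalIntegrable φ volume 0 t) (hlim : Tendsto φ atTop (𝓝 L)) :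
    Tendsto (fun t => (∫ u in (0:ℝ)..t, φ u) / t) atTop (𝓝 L) := by
  rw [Metric.tendsto_atTop]
  intro ε hε
  obtain ⟨T₀, hT₀⟩ := Metric.tendsto_atTop.1 hlim (ε / 2) (half_pos hε)
  set T := max T₀ 0
  set C := ∫ u in (0:ℝ)..T, (φ u - L)
  refine ⟨max T (2 * |C| / ε) + 1, fun t ht => ?_⟩
  have htT : T < t := by linarith [le_max_left T (2 * |C| / ε)]
  have ht : 0 < t := (le_max_right T₀ 0).trans_lt htT
  have htC : 2 * |C| < ε * t := by
    have := (div_lt_iff₀ hε).1 (by linarith [le_max_right T (2 * |C| / ε)] : 2 * |C| / ε < t)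
    linarith
  have hint : ∀ a, 0 ≤ a → a ≤ t → IntervalIntegrable (fun u => φ u - L) volume a t :=
    fun a ha hat => ((hφ t ht.le).mono_set
      (uIcc_subset_uIcc_right (mem_uIcc.2 (.inl ⟨ha, hat⟩)))).sub intervalIntegrable_const
  have hsplit : (∫ u in (0:ℝ)..t, φ u) / t - L = (C + ∫ u in T..t, (φ u - L)) / t := by
    rw [intervalIntegral.integral_add_adjacent_intervals
      ((hint 0 le_rfl ht.le).mono_set
        (uIcc_subset_uIcc_left (mem_uIcc.2 (.inl ⟨le_max_right _ _, htT.le⟩))))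
      (hint T (le_max_right _ _) htT.le), intervalIntegral.integral_sub (hφ t ht.le)
      intervalIntegrable_const, intervalIntegral.integral_const, smul_eq_mul]
    field_simp
    ring
  have htail : |∫ u in T..t, (φ u - L)| ≤ ε / 2 * (t - T) := by
    have := intervalIntegral.norm_integral_le_of_norm_le_const (a := T) (b := t)
      (f := fun u => φ u - L) (C := ε / 2) fun u hu =>
        (hT₀ u ((le_max_left T₀ 0).trans (uIoc_of_le htT.le ▸ hu).1.le)).le
    rwa [abs_of_pos (sub_pos.2 htT)] at this
  rw [Real.dist_eq, hsplit, abs_div, abs_of_pos ht, div_lt_iff₀ ht]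
  calc |C + ∫ u in T..t, (φ u - L)| ≤ |C| + ε / 2 * (t - T) :=
        (abs_add_le _ _).trans (by linarith)
    _ < ε * t := by nlinarith [le_max_right T₀ 0]

theorem intervalIntegral_integral_swap_triangle {E : Type*} [NormedAddCommGroup E]
    [NormedSpace ℝ E] {f : ℝ → ℝ → E} {a b : ℝ} (hab : a ≤ b)
    (hf : IntegrableOn (Function.uncurry f) (Icc a b ×ˢ Icc a b)) :
    ∫ t in a..b, ∫ y in a..t, f t y = ∫ y in a..b, ∫ t in y..b, f t y := by
  set μ := volume.restrict (Ioc a b)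
  set S := {p : ℝ × ℝ | p.2 ≤ p.1}
  have hS : MeasurableSet S := measurableSet_le measurable_snd measurable_fst
  have hg : Integrable (S.indicator (Function.uncurry f)) (μ.prod μ) := by
    rw [Measure.prod_restrict, ← Measure.volume_eq_prod]
    exact (hf.mono_set (prod_mono Ioc_subset_Icc_self Ioc_subset_Icc_self)).indicator hS
  have hleft : ∀ t ∈ Ioc a b, ∫ y, S.indicator (Function.uncurry f) (t, y) ∂μ
      = ∫ y in a..t, f t y := fun t ht => by
    have : ∀ y, S.indicator (Function.uncurry f) (t, y) = (Iic t).indicator (f t) y :=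
      fun y => by simp [S, indicator_apply]
    simp_rw [this]
    rw [setIntegral_indicator measurableSet_Iic, Ioc_inter_Iic, min_eq_right ht.2,
      intervalIntegral.integral_of_le ht.1.le]
  have hright : ∀ y ∈ Ioc a b, ∫ t, S.indicator (Function.uncurry f) (t, y) ∂μ
      = ∫ t in y..b, f t y := fun y hy => by
    have : ∀ t, S.indicator (Function.uncurry f) (t, y) = (Ici y).indicator (f · y) t :=
      fun t => by simp [S, indicator_apply]
    have hI : Ioc a b ∩ Ici y = Icc y b := by
      ext t
      simp only [mem_inter_iff, mem_Ioc, mem_Ici, mem_Icc]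
      constructor
      · exact fun h => ⟨h.2, h.1.2⟩
      · exact fun h => ⟨⟨hy.1.trans_le h.1, h.2⟩, h.1⟩
    simp_rw [this]
    rw [setIntegral_indicator measurableSet_Ici, hI, integral_Icc_eq_integral_Ioc,
      intervalIntegral.integral_of_le hy.2]
  rw [intervalIntegral.integral_of_le hab, intervalIntegral.integral_of_le hab,
    ← setIntegral_congr_fun measurableSet_Ioc hleft,
    ← setIntegral_congr_fun measurableSet_Ioc hright]
  exact integral_integral_swap (f := fun t y => S.indicator (Function.uncurry f) (t, y)) hg

theorem MonotoneOn.intervalIntegrable_of_Ici {F : ℝ → ℝ} {c a b : ℝ}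
    (hF : MonotoneOn F (Ici c)) (ha : c ≤ a) (hb : c ≤ b) : IntervalIntegrable F volume a b :=
  (hF.mono fun _ hx => (le_min ha hb).trans hx.1).intervalIntegrable

theorem MonotoneOn.integrableOn_mul_comp_snd {F : ℝ → ℝ} {a b C : ℝ}
    (hF : MonotoneOn F (Icc a b)) {k : ℝ × ℝ → ℝ} (hk : Continuous k) (hkC : ∀ p, ‖k p‖ ≤ C) :
    IntegrableOn (fun p => k p * F p.2) (Icc a b ×ˢ Icc a b) := by
  rw [IntegrableOn, Measure.volume_eq_prod, ← Measure.prod_restrict]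
  exact (hF.integrableOn_isCompact isCompact_Icc |>.comp_snd _).bdd_mul hk.aestronglyMeasurable
    (ae_of_all _ hkC)

namespace RenewalEquation

theorem integral_two_div_one_add_pow_three {x : ℝ} (hx : 0 ≤ x) :
    ∫ s in (0:ℝ)..x, 2 / (1 + s) ^ 3 = 1 - ((1 + x) ^ 2)⁻¹ := by
  have hpos : ∀ s ∈ uIcc 0 x, 1 + s ≠ 0 := fun s hs => by
    rw [uIcc_of_le hx] at hs; linarith [hs.1]
  have hderiv : ∀ s ∈ uIcc 0 x, HasDerivAt (fun s => -((1 + s) ^ 2)⁻¹) (2 / (1 + s) ^ 3) s :=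
    fun s hs => by
      refine ((((hasDerivAt_id s).const_add 1).pow 2).inv (pow_ne_zero 2 (hpos s hs))).neg
        |>.congr_deriv ?_
      have := hpos s hs
      simp only [id, Pi.pow_apply]
      field_simp
      ring
  rw [intervalIntegral.integral_eq_sub_of_hasDerivAt hderiv (ContinuousOn.intervalIntegrable
    (continuousOn_const.div (by fun_prop) fun s hs => pow_ne_zero 3 (hpos s hs)))]
  simp only [add_zero, one_pow, inv_one]
  ring

theorem integral_one_div_one_add_sq {x : ℝ} (hx : 0 ≤ x) :
    ∫ s in (0:ℝ)..x, 1 / (1 + s) ^ 2 = x / (1 + x) := by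
  have hpos : ∀ s ∈ uIcc 0 x, 1 + s ≠ 0 := fun s hs => by
    rw [uIcc_of_le hx] at hs; linarith [hs.1]
  have hderiv : ∀ s ∈ uIcc 0 x, HasDerivAt (fun s => s / (1 + s)) (1 / (1 + s) ^ 2) s :=
    fun s hs => by
      refine ((hasDerivAt_id s).div ((hasDerivAt_id s).const_add 1) (hpos s hs)).congr_deriv ?_
      have := hpos s hs
      simp only [id]
      field_simp
      ring
  rw [intervalIntegral.integral_eq_sub_of_hasDerivAt hderiv (ContinuousOn.intervalIntegrable
    (continuousOn_const.div (by fun_prop) fun s hs => pow_ne_zero 2 (hpos s hs)))]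
  simp

theorem integral_two_mul_div_one_add_pow_three {x : ℝ} (hx : 0 ≤ x) :
    ∫ t in (0:ℝ)..x, 2 * t / (1 + t) ^ 3 = (x / (1 + x)) ^ 2 := by
  have hpos : ∀ t ∈ uIcc 0 x, 1 + t ≠ 0 := fun t ht => by
    rw [uIcc_of_le hx] at ht; linarith [ht.1]
  have hderiv : ∀ t ∈ uIcc 0 x,
      HasDerivAt (fun t => (t / (1 + t)) ^ 2) (2 * t / (1 + t) ^ 3) t := fun t ht => by
    refine (((hasDerivAt_id t).div ((hasDerivAt_id t).const_add 1) (hpos t ht)).pow 2)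
      |>.congr_deriv ?_
    have := hpos t ht
    simp only [id, Pi.div_apply, Nat.cast_ofNat, Nat.add_one_sub_one, pow_one]
    field_simp
    ring
  rw [intervalIntegral.integral_eq_sub_of_hasDerivAt hderiv (ContinuousOn.intervalIntegrable
    ((by fun_prop : ContinuousOn (fun t : ℝ => 2 * t) _).div (by fun_prop)
      fun t ht => pow_ne_zero 3 (hpos t ht)))]
  simp

theorem integral_one_div_one_add_sub_sq {a T : ℝ} (haT : a ≤ T) :
    ∫ y in a..T, 1 / (1 + (T - y)) ^ 2 = (T - a) / (1 + (T - a)) := by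
  rw [intervalIntegral.integral_comp_sub_left (fun x => 1 / (1 + x) ^ 2) T, sub_self,
    integral_one_div_one_add_sq (sub_nonneg.2 haT)]

theorem integral_inv_one_add_div_sq_le {s : ℝ} (hs : 0 ≤ s) :
    ∫ y in (0:ℝ)..s, (1 + y)⁻¹ / (1 + (s + 1 - y)) ^ 2
      ≤ (1 / 2 - 1 / (s + 2)) / (s + 3) + 2 * Real.log (s + 3) / (s + 3) ^ 2 := by
  have hpos : ∀ y ∈ uIcc 0 s, 0 < 1 + y ∧ 0 < 1 + (s + 1 - y) := fun y hy => by
    rw [uIcc_of_le hs] at hy; constructor <;> linarith [hy.1, hy.2]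
  -- partial fractions: `1 / (a b²) = (1 / a + 1 / b) / (a + b)² + 1 / ((a + b) b²)`
  have hderiv : ∀ y ∈ uIcc 0 s, HasDerivAt
      (fun y => (Real.log (1 + y) - Real.log (1 + (s + 1 - y))) / (s + 3) ^ 2
        + (s + 3)⁻¹ * (1 + (s + 1 - y))⁻¹)
      ((1 + y)⁻¹ / (1 + (s + 1 - y)) ^ 2) y := fun y hy => by
    obtain ⟨ha, hb⟩ := hpos y hy
    have hlin : HasDerivAt (fun y => 1 + (s + 1 - y)) (-1) y := by
      simpa using ((hasDerivAt_id y).const_sub (s + 1)).const_add 1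
    refine (((((hasDerivAt_id y).const_add 1).log ha.ne').sub (hlin.log hb.ne')).div_const
      ((s + 3) ^ 2)).add ((hlin.inv hb.ne').const_mul (s + 3)⁻¹) |>.congr_deriv ?_
    simp only [id]
    field_simp
    ring
  have hval : ∫ y in (0:ℝ)..s, (1 + y)⁻¹ / (1 + (s + 1 - y)) ^ 2
      = (Real.log (1 + s) + Real.log (s + 2) - Real.log 2) / (s + 3) ^ 2
        + (1 / 2 - 1 / (s + 2)) / (s + 3) := by
    rw [intervalIntegral.integral_eq_sub_of_hasDerivAt hderiv (ContinuousOn.intervalIntegrable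
      ((continuousOn_inv₀.comp (by fun_prop) fun y hy => (hpos y hy).1.ne').div (by fun_prop)
        fun y hy => (pow_pos (hpos y hy).2 2).ne'))]
    rw [show (1:ℝ) + (s + 1 - s) = 2 by ring, show (1:ℝ) + (s + 1 - 0) = s + 2 by ring,
      add_zero, Real.log_one]
    field_simp
    ring
  have hlog : Real.log (1 + s) + Real.log (s + 2) - Real.log 2 ≤ 2 * Real.log (s + 3) := by
    have h₁ := Real.log_le_log (by linarith) (by linarith : 1 + s ≤ s + 3)
    have h₂ := Real.log_le_log (by linarith) (by linarith : s + 2 ≤ s + 3)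
    linarith [Real.log_pos (by norm_num : (1:ℝ) < 2)]
  rw [hval, add_comm]
  gcongr

theorem intervalIntegrable_div_one_add_sub_sq {g : ℝ → ℝ} {a b T : ℝ}
    (hg : IntervalIntegrable g volume a b) (haT : a ≤ T) (hbT : b ≤ T) :
    IntervalIntegrable (fun y => g y / (1 + (T - y)) ^ 2) volume a b := by
  simp_rw [div_eq_mul_inv]
  refine hg.mul_continuousOn (ContinuousOn.inv₀ (by fun_prop) fun y hy => ?_)
  have : y ≤ T := hy.2.trans (max_le haT hbT)
  positivity

variable {F : ℝ → ℝ}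

theorem integral_div_one_add_sub_sq_eq (hF : MonotoneOn F (Ici 0))
    (hren : ∀ t, 0 ≤ t →
      F t = 2 * t / (1 + t) ^ 3 + ∫ y in (0:ℝ)..t, 2 / (1 + (t - y)) ^ 3 * F y)
    {T : ℝ} (hT : 0 ≤ T) :
    ∫ y in (0:ℝ)..T, F y / (1 + (T - y)) ^ 2 = (T / (1 + T)) ^ 2 := by
  -- `1 + (t - y)` vanishes inside `[0, T]²`, so Fubini's theorem on the square needs this
  -- bounded continuous extension of the kernel
  set κ : ℝ → ℝ := fun s => 2 / (1 + |s|) ^ 3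
  have hκ : ∀ s, 0 ≤ s → κ s = 2 / (1 + s) ^ 3 := fun s hs => by simp [κ, abs_of_nonneg hs]
  have hκc : Continuous κ := continuous_const.div (by fun_prop) fun s => by positivity
  have hFint : IntervalIntegrable F volume 0 T := hF.intervalIntegrable_of_Ici le_rfl hT
  have hint : IntegrableOn (Function.uncurry fun t y => κ (t - y) * F y) (Icc 0 T ×ˢ Icc 0 T) :=
    (hF.mono Icc_subset_Ici_self).integrableOn_mul_comp_snd (C := 2)
      (hκc.comp (by fun_prop)) fun p => by
        rw [Real.norm_eq_abs, abs_of_nonneg (by positivity)]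
        exact div_le_self zero_le_two (one_le_pow₀ (by linarith [abs_nonneg (p.1 - p.2)]))
  have hleft : ∫ t in (0:ℝ)..T, ∫ y in (0:ℝ)..t, κ (t - y) * F y
      = ∫ t in (0:ℝ)..T, (F t - 2 * t / (1 + t) ^ 3) := by
    refine intervalIntegral.integral_congr fun t ht => ?_
    rw [uIcc_of_le hT] at ht
    rw [hren t ht.1, add_sub_cancel_left]
    refine intervalIntegral.integral_congr fun y hy => ?_
    rw [uIcc_of_le ht.1] at hy
    simp only [hκ (t - y) (sub_nonneg.2 hy.2)]
  have hright : ∫ y in (0:ℝ)..T, ∫ t in y..T, κ (t - y) * F y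
      = ∫ y in (0:ℝ)..T, (F y - F y / (1 + (T - y)) ^ 2) := by
    refine intervalIntegral.integral_congr fun y hy => ?_
    rw [uIcc_of_le hT] at hy
    rw [intervalIntegral.integral_mul_const, intervalIntegral.integral_comp_sub_right (κ ·) y,
      sub_self, intervalIntegral.integral_congr fun s hs => hκ s ?_,
      integral_two_div_one_add_pow_three (sub_nonneg.2 hy.2)]
    · ring
    · rw [uIcc_of_le (sub_nonneg.2 hy.2)] at hs
      exact hs.1
  have hswap := intervalIntegral_integral_swap_triangle hT hint
  rw [hleft, hright, intervalIntegral.integral_sub hFint, intervalIntegral.integral_sub hFint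
    (intervalIntegrable_div_one_add_sub_sq hFint hT le_rfl),
    integral_two_mul_div_one_add_pow_three hT] at hswap
  · linarith
  · refine ContinuousOn.intervalIntegrable ((by fun_prop : Continuous fun t : ℝ => 2 * t)
      |>.continuousOn.div (by fun_prop) fun t ht => ?_)
    rw [uIcc_of_le hT] at ht
    have := ht.1
    positivity

theorem integral_one_sub_div_one_add_sub_sq_eq (hF : MonotoneOn F (Ici 0))
    (hren : ∀ t, 0 ≤ t →
      F t = 2 * t / (1 + t) ^ 3 + ∫ y in (0:ℝ)..t, 2 / (1 + (t - y)) ^ 3 * F y)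
    {T : ℝ} (hT : 0 ≤ T) :
    ∫ y in (0:ℝ)..T, (1 - F y) / (1 + (T - y)) ^ 2 = T / (1 + T) ^ 2 := by
  simp_rw [sub_div]
  rw [intervalIntegral.integral_sub
      (intervalIntegrable_div_one_add_sub_sq intervalIntegrable_const hT le_rfl)
      (intervalIntegrable_div_one_add_sub_sq (hF.intervalIntegrable_of_Ici le_rfl hT) hT le_rfl),
    integral_one_div_one_add_sub_sq hT, integral_div_one_add_sub_sq_eq hF hren hT, sub_zero]
  have : 1 + T ≠ 0 := by positivity
  field_simp
  ring

theorem one_sub_le_inv_one_add (hF : MonotoneOn F (Ici 0)) (hF0 : F 0 = 0)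
    (hG : ∀ T, 0 ≤ T → ∫ y in (0:ℝ)..T, (1 - F y) / (1 + (T - y)) ^ 2 = T / (1 + T) ^ 2)
    {t : ℝ} (ht : 0 ≤ t) : 1 - F t ≤ (1 + t)⁻¹ := by
  rcases ht.eq_or_lt with rfl | ht
  · simp [hF0]
  have hle : (1 - F t) * (t / (1 + t)) ≤ (1 + t)⁻¹ * (t / (1 + t)) := calc
    (1 - F t) * (t / (1 + t)) = ∫ y in (0:ℝ)..t, (1 - F t) * (1 / (1 + (t - y)) ^ 2) := by
      rw [intervalIntegral.integral_const_mul, integral_one_div_one_add_sub_sq ht.le, sub_zero]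
    _ ≤ ∫ y in (0:ℝ)..t, (1 - F y) / (1 + (t - y)) ^ 2 := by
      refine intervalIntegral.integral_mono_on ht.le
        ((intervalIntegrable_div_one_add_sub_sq intervalIntegrable_const ht.le le_rfl).const_mul
          (1 - F t))
        (intervalIntegrable_div_one_add_sub_sq
          (intervalIntegrable_const.sub (hF.intervalIntegrable_of_Ici le_rfl ht.le)) ht.le le_rfl)
        fun y hy => ?_
      have := hF hy.1 ht.le hy.2
      rw [mul_one_div]
      gcongr
    _ = t / (1 + t) ^ 2 := hG t ht.le
    _ = (1 + t)⁻¹ * (t / (1 + t)) := by field_simp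
  exact le_of_mul_le_mul_right hle (by positivity)

noncomputable def tailLowerBound (s : ℝ) : ℝ :=
  2 * (s + 1) / (s + 2) ^ 2 - (1 - 2 / (s + 2)) / (s + 3) - 4 * Real.log (s + 3) / (s + 3) ^ 2

theorem tailLowerBound_le_one_sub (hF : MonotoneOn F (Ici 0)) (hF0 : F 0 = 0)
    (hG : ∀ T, 0 ≤ T → ∫ y in (0:ℝ)..T, (1 - F y) / (1 + (T - y)) ^ 2 = T / (1 + T) ^ 2)
    {s : ℝ} (hs : 0 ≤ s) : tailLowerBound s ≤ 1 - F s := by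
  have hint : ∀ a b, 0 ≤ a → 0 ≤ b → a ≤ s + 1 → b ≤ s + 1 →
      IntervalIntegrable (fun y => (1 - F y) / (1 + (s + 1 - y)) ^ 2) volume a b :=
    fun a b ha hb haT hbT => intervalIntegrable_div_one_add_sub_sq
      (intervalIntegrable_const.sub (hF.intervalIntegrable_of_Ici ha hb)) haT hbT
  have hsplit := intervalIntegral.integral_add_adjacent_intervals
    (hint 0 s le_rfl hs (by linarith) (by linarith))
    (hint s (s + 1) hs (by linarith) (by linarith) le_rfl)
  rw [hG (s + 1) (by linarith)] at hsplit
  have hfar : ∫ y in (0:ℝ)..s, (1 - F y) / (1 + (s + 1 - y)) ^ 2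
      ≤ (1 / 2 - 1 / (s + 2)) / (s + 3) + 2 * Real.log (s + 3) / (s + 3) ^ 2 := by
    refine le_trans (intervalIntegral.integral_mono_on hs
      (hint 0 s le_rfl hs (by linarith) (by linarith)) ?_ fun y hy => ?_)
      (integral_inv_one_add_div_sq_le hs)
    · exact intervalIntegrable_div_one_add_sub_sq (ContinuousOn.intervalIntegrable
        (ContinuousOn.inv₀ (by fun_prop) fun y hy => by
          rw [uIcc_of_le hs] at hy; have := hy.1; positivity)) (by linarith) (by linarith)
    · have : y ≤ s + 1 := by linarith [hy.2]
      gcongr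
      exact one_sub_le_inv_one_add hF hF0 hG hy.1
  have hnear : ∫ y in s..s + 1, (1 - F y) / (1 + (s + 1 - y)) ^ 2 ≤ (1 - F s) / 2 := calc
    _ ≤ ∫ y in s..s + 1, (1 - F s) * (1 / (1 + (s + 1 - y)) ^ 2) := by
      refine intervalIntegral.integral_mono_on (by linarith)
        (hint s (s + 1) hs (by linarith) (by linarith) le_rfl)
        ((intervalIntegrable_div_one_add_sub_sq intervalIntegrable_const (by linarith)
          le_rfl).const_mul (1 - F s)) fun y hy => ?_
      have := hF hs (hs.trans hy.1) hy.1
      rw [mul_one_div]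
      gcongr
    _ = (1 - F s) / 2 := by
      rw [intervalIntegral.integral_const_mul, integral_one_div_one_add_sub_sq (by linarith)]
      ring
  have e₁ : 2 * (s + 1) / (s + 2) ^ 2 = 2 * ((s + 1) / (1 + (s + 1)) ^ 2) := by ring
  have e₂ : (1 - 2 / (s + 2)) / (s + 3) = 2 * ((1 / 2 - 1 / (s + 2)) / (s + 3)) := by ring
  have e₃ : 4 * Real.log (s + 3) / (s + 3) ^ 2 = 2 * (2 * Real.log (s + 3) / (s + 3) ^ 2) := by
    ring
  rw [tailLowerBound, e₁, e₂, e₃]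
  linarith

theorem tendsto_mul_tailLowerBound :
    Tendsto (fun s => s * tailLowerBound s) atTop (𝓝 1) := by
  have h₁ := tendsto_add_div_add_atTop 0 2
  have h₂ := tendsto_add_div_add_atTop 1 2
  have h₃ := tendsto_add_div_add_atTop 0 3
  have h₄ : Tendsto (fun s : ℝ => 2 / (s + 2)) atTop (𝓝 0) :=
    tendsto_const_nhds.div_atTop (tendsto_atTop_add_const_right _ 2 tendsto_id)
  have h₅ : Tendsto (fun s : ℝ => Real.log (s + 3) / (s + 3)) atTop (𝓝 0) :=
    Real.isLittleO_log_id_atTop.tendsto_div_nhds_zero.comp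
      (tendsto_atTop_add_const_right _ 3 tendsto_id)
  have h := (((h₁.mul h₂).const_mul 2).sub (h₃.mul ((tendsto_const_nhds (x := 1)).sub h₄))).sub
    ((h₃.mul h₅).const_mul 4)
  rw [show (2:ℝ) * (1 * 1) - 1 * (1 - 0) - 4 * (1 * 0) = 1 by norm_num] at h
  refine h.congr' ?_
  filter_upwards [eventually_gt_atTop 0] with s hs
  rw [tailLowerBound]
  field_simp
  ring

end RenewalEquation

open RenewalEquation in
theorem integral_t_one_sub_F_asymptotic_general
    (F : ℝ → ℝ)
    (hmono : ∀ a b : ℝ, 0 ≤ a → a ≤ b → F a ≤ F b)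
    (hrenewal : ∀ t, 0 ≤ t →
      F t = 2 * t / (1 + t) ^ 3 + ∫ y in (0:ℝ)..t, 2 / (1 + (t - y)) ^ 3 * F y) :
    Filter.Tendsto
      (fun t : ℝ => (∫ u in (0:ℝ)..t, u * (1 - F u)) / t)
      atTop (nhds 1) := by
  have hF : MonotoneOn F (Ici 0) := fun a ha b _ hab => hmono a b ha hab
  have hF0 : F 0 = 0 := by simpa using hrenewal 0 le_rfl
  have hG := fun T => integral_one_sub_div_one_add_sub_sq_eq hF hrenewal (T := T)
  refine tendsto_integral_div_of_tendsto (fun t ht => ?_) ?_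
  · exact (intervalIntegrable_const.sub (hF.intervalIntegrable_of_Ici le_rfl ht))
      |>.continuousOn_mul continuousOn_id
  have hupper : Tendsto (fun s : ℝ => s * (1 + s)⁻¹) atTop (𝓝 1) :=
    (tendsto_add_div_add_atTop 0 1).congr fun s => by ring
  refine tendsto_of_tendsto_of_tendsto_of_le_of_le' tendsto_mul_tailLowerBound hupper ?_ ?_
  · filter_upwards [eventually_ge_atTop 0] with s hs
    exact mul_le_mul_of_nonneg_left (tailLowerBound_le_one_sub hF hF0 hG hs) hs
  · filter_upwards [eventually_ge_atTop 0] with s hs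
    exact mul_le_mul_of_nonneg_left (one_sub_le_inv_one_add hF hF0 hG hs) hs

/-- For the CDF `F` solving the renewal equation,
`∫₀ᵗ u (1 - F(u)) du ~ t` as `t → ∞`. -/
theorem integral_t_one_sub_F_asymptotic
    (F F' : ℝ → ℝ)
    (hmono : ∀ a b : ℝ, 0 ≤ a → a ≤ b → F a ≤ F b)
    (hzero : F 0 = 0)
    (hlim : Filter.Tendsto F atTop (nhds 1))
    (hderiv : ∀ t, 0 ≤ t → HasDerivWithinAt F (F' t) (Ici 0) t)
    (hcont : ContinuousOn F' (Ici 0))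
    (hrenewal : ∀ t, 0 ≤ t →
      F t = 2 * t / (1 + t) ^ 3 + ∫ y in (0:ℝ)..t, 2 / (1 + (t - y)) ^ 3 * F y) :
    Filter.Tendsto
      (fun t : ℝ => (∫ u in (0:ℝ)..t, u * (1 - F u)) / t)
      atTop (nhds 1) :=
  integral_t_one_sub_F_asymptotic_general F hmono hrenewal
end
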